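/- arXiv:1507.04268 — 7 statements merged into one kernel-verified Lean document; each statement's English description precedes it below -/
import Mathlib

section
/- Let Λ be a finite dimensional algebra over a field k. Then the lattice of torsion classes of Λ (ordered by inclusion) is meet-semidistributive: if 𝒯_1, 𝒯_2, 𝒯_3 are torsion classes with 𝒯_1 ∧ 𝒯_3 = 𝒯_2 ∧ 𝒯_3, then (𝒯_1 ∨ 𝒯_2) ∧ 𝒯_3 = 𝒯_1 ∧ 𝒯_3. -/
open CategoryTheory

universe u

/-- A torsion class in `Λ`-mod (finite-dimensional modules): a class of
finite-dimensional modules containing the zero modules and closed under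
quotients and extensions. -/
def IsTorsionClass (Λ : Type u) [Ring Λ] (T : Set (ModuleCat.{u} Λ)) : Prop :=
  T ⊆ {X | Module.Finite Λ X} ∧
  (∀ X : ModuleCat.{u} Λ, Module.Finite Λ X → Subsingleton X → X ∈ T) ∧
  (∀ X Y : ModuleCat.{u} Λ, X ∈ T → ∀ f : X ⟶ Y, Function.Surjective f → Y ∈ T) ∧
  (∀ (X : ModuleCat.{u} Λ) (N : Submodule Λ X), Module.Finite Λ X →
    ModuleCat.of Λ N ∈ T → ModuleCat.of Λ (X ⧸ N) ∈ T → X ∈ T)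

/-- The join of two torsion classes: the smallest torsion class containing both. -/
def torsJoin (Λ : Type u) [Ring Λ] (T U : Set (ModuleCat.{u} Λ)) : Set (ModuleCat.{u} Λ) :=
  ⋂₀ {V | IsTorsionClass Λ V ∧ T ⊆ V ∧ U ⊆ V}

/-!
The join `𝒯₁ ∨ 𝒯₂` lies in `Filt(𝒯₁ ∪ 𝒯₂)`, which is itself a torsion class, so it suffices
to show that a module `X ∈ 𝒯₃` with a filtration `0 ⊂ N ⊂ ⋯ ⊂ X` whose subquotients lie in
`𝒯₁ ∪ 𝒯₂` belongs to `𝒯₁`. By induction on the length of the filtration,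
`X ⧸ N ∈ 𝒯₁ ∩ 𝒯₃ = 𝒯₂ ∩ 𝒯₃`; whichever of `𝒯₁`, `𝒯₂` contains `N` then also contains `X` by
closure under extensions, and in either case `X ∈ 𝒯₁ ∩ 𝒯₃`.
-/

section Filtration

variable {Λ : Type u} [Ring Λ]

def IsQuotientClosed (S : Set (ModuleCat.{u} Λ)) : Prop :=
  ∀ X Y : ModuleCat.{u} Λ, X ∈ S → ∀ f : X ⟶ Y, Function.Surjective f → Y ∈ S

theorem IsTorsionClass.isQuotientClosed {T : Set (ModuleCat.{u} Λ)} (hT : IsTorsionClass Λ T) :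
    IsQuotientClosed T :=
  hT.2.2.1

theorem IsQuotientClosed.union {T U : Set (ModuleCat.{u} Λ)} (hT : IsQuotientClosed T)
    (hU : IsQuotientClosed U) : IsQuotientClosed (T ∪ U) := fun X Y hX f hf =>
  hX.imp (fun h => hT X Y h f hf) (fun h => hU X Y h f hf)

/-- `X` is finitely generated and has a finite filtration `0 ⊂ N ⊂ ⋯ ⊂ X` whose subquotients
lie in `S`; the constructor `extension` peels off the bottom piece `N`. -/
inductive HasFiltration (S : Set (ModuleCat.{u} Λ)) : ModuleCat.{u} Λ → Prop
  | of_subsingleton (X : ModuleCat.{u} Λ) [Module.Finite Λ X] [Subsingleton X] :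
      HasFiltration S X
  | extension (X : ModuleCat.{u} Λ) (N : Submodule Λ X) [Module.Finite Λ X] :
      ModuleCat.of Λ N ∈ S → HasFiltration S (ModuleCat.of Λ (X ⧸ N)) → HasFiltration S X

namespace HasFiltration

variable {S : Set (ModuleCat.{u} Λ)}

theorem finite {X : ModuleCat.{u} Λ} (hX : HasFiltration S X) : Module.Finite Λ X := by
  cases hX <;> assumption

theorem of_surjective (hS : IsQuotientClosed S) {X : ModuleCat.{u} Λ} (hX : HasFiltration S X) :
    ∀ {Y : ModuleCat.{u} Λ} (f : X ⟶ Y), Function.Surjective f → HasFiltration S Y := by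
  induction hX with
  | of_subsingleton X =>
    intro Y f hf
    have : Module.Finite Λ Y := Module.Finite.of_surjective f.hom hf
    have : Subsingleton Y := hf.subsingleton
    exact of_subsingleton Y
  | extension X N hN _ ih =>
    intro Y f hf
    have : Module.Finite Λ Y := Module.Finite.of_surjective f.hom hf
    refine extension Y (N.map f.hom) ?_
      (ih (ModuleCat.ofHom (N.mapQ _ f.hom (N.le_comap_map f.hom))) ?_)
    · exact hS _ _ hN (ModuleCat.ofHom (f.hom.submoduleMap N)) (f.hom.submoduleMap_surjective N)
    · intro y
      obtain ⟨y, rfl⟩ := Submodule.mkQ_surjective _ y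
      obtain ⟨x, rfl⟩ := hf y
      exact ⟨Submodule.Quotient.mk x, rfl⟩

theorem of_injective_of_quotient (hS : IsQuotientClosed S) {Z : ModuleCat.{u} Λ}
    (hZ : HasFiltration S Z) :
    ∀ {X : ModuleCat.{u} Λ} [Module.Finite Λ X] (g : Z ⟶ X), Function.Injective g →
      HasFiltration S (ModuleCat.of Λ (X ⧸ LinearMap.range g.hom)) → HasFiltration S X := by
  induction hZ with
  | of_subsingleton Z =>
    intro X _ g _ hX
    have hrange : LinearMap.range g.hom = ⊥ := by
      refine (Submodule.eq_bot_iff _).mpr ?_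
      rintro _ ⟨z, rfl⟩
      rw [Subsingleton.elim z 0, map_zero]
    exact hX.of_surjective hS
      (ModuleCat.ofHom (Submodule.quotEquivOfEqBot _ hrange).toLinearMap)
      (Submodule.quotEquivOfEqBot _ hrange).surjective
  | extension Z M hM _ ih =>
    intro X _ g hg hX
    -- The image of the bottom piece `M` of `Z` becomes the bottom piece of `X`.
    refine extension X (M.map g.hom) ?_ ?_
    · exact hS _ _ hM (ModuleCat.ofHom (g.hom.submoduleMap M)) (g.hom.submoduleMap_surjective M)
    · let gM : (Z ⧸ M) →ₗ[Λ] (X ⧸ M.map g.hom) := M.mapQ _ g.hom (M.le_comap_map g.hom)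
      have hgM : Function.Injective gM := by
        rw [← LinearMap.ker_eq_bot, Submodule.ker_mapQ,
          Submodule.comap_map_eq_of_injective hg, Submodule.mkQ_map_self]
      refine ih (ModuleCat.ofHom gM) hgM (hX.of_surjective hS
        (ModuleCat.ofHom ((LinearMap.range g.hom).mapQ _ (Submodule.mkQ _) ?_)) ?_)
      · rintro _ ⟨z, rfl⟩
        exact ⟨Submodule.Quotient.mk z, rfl⟩
      · intro y
        obtain ⟨y, rfl⟩ := Submodule.mkQ_surjective _ y
        obtain ⟨x, rfl⟩ := Submodule.mkQ_surjective _ y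
        exact ⟨Submodule.Quotient.mk x, rfl⟩

theorem of_mem (hS : IsQuotientClosed S) {X : ModuleCat.{u} Λ} [Module.Finite Λ X]
    (hX : X ∈ S) : HasFiltration S X := by
  refine extension X ⊤ ?_ (of_subsingleton _)
  exact hS _ _ hX (ModuleCat.ofHom (LinearMap.id.codRestrict ⊤ fun _ => trivial))
    fun ⟨x, _⟩ => ⟨x, rfl⟩

theorem isTorsionClass (hS : IsQuotientClosed S) : IsTorsionClass Λ {X | HasFiltration S X} := by
  refine ⟨fun X hX => hX.finite, fun X _ _ => of_subsingleton X,
    fun X Y hX f hf => hX.of_surjective hS f hf, fun X N _ hN hXN => ?_⟩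
  refine hN.of_injective_of_quotient hS (ModuleCat.ofHom N.subtype) N.injective_subtype ?_
  rwa [ModuleCat.hom_ofHom, Submodule.range_subtype]

end HasFiltration

theorem torsJoin_subset_hasFiltration {T U : Set (ModuleCat.{u} Λ)} (hT : IsTorsionClass Λ T)
    (hU : IsTorsionClass Λ U) : torsJoin Λ T U ⊆ {X | HasFiltration (T ∪ U) X} := by
  have hTU := hT.isQuotientClosed.union hU.isQuotientClosed
  refine Set.sInter_subset_of_mem ⟨HasFiltration.isTorsionClass hTU, fun X hX => ?_,
    fun X hX => ?_⟩
  · have : Module.Finite Λ X := hT.1 hX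
    exact HasFiltration.of_mem hTU (Or.inl hX)
  · have : Module.Finite Λ X := hU.1 hX
    exact HasFiltration.of_mem hTU (Or.inr hX)

theorem HasFiltration.mem_left_of_inter_eq {T₁ T₂ T₃ : Set (ModuleCat.{u} Λ)}
    (h₁ : IsTorsionClass Λ T₁) (h₂ : IsTorsionClass Λ T₂) (h₃ : IsQuotientClosed T₃)
    (h : T₁ ∩ T₃ = T₂ ∩ T₃) {X : ModuleCat.{u} Λ} (hX : HasFiltration (T₁ ∪ T₂) X) :
    X ∈ T₃ → X ∈ T₁ := by
  induction hX with
  | of_subsingleton X => exact fun _ => h₁.2.1 X inferInstance inferInstance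
  | extension X N hN _ ih =>
    intro hX₃
    have hQ₃ : ModuleCat.of Λ (X ⧸ N) ∈ T₃ := h₃ _ _ hX₃ (ModuleCat.ofHom N.mkQ)
      N.mkQ_surjective
    have hQ₁ := ih hQ₃
    rcases hN with hN₁ | hN₂
    · exact h₁.2.2.2 X N inferInstance hN₁ hQ₁
    · have hQ₂ : ModuleCat.of Λ (X ⧸ N) ∈ T₂ := ((Set.ext_iff.mp h _).mp ⟨hQ₁, hQ₃⟩).1
      have hX₂ : X ∈ T₂ := h₂.2.2.2 X N inferInstance hN₂ hQ₂
      exact ((Set.ext_iff.mp h X).mpr ⟨hX₂, hX₃⟩).1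

end Filtration

theorem stmt5_general (Λ : Type u) [Ring Λ] (T₁ T₂ T₃ : Set (ModuleCat.{u} Λ))
    (h₁ : IsTorsionClass Λ T₁) (h₂ : IsTorsionClass Λ T₂) (h₃ : IsTorsionClass Λ T₃)
    (h : T₁ ∩ T₃ = T₂ ∩ T₃) :
    torsJoin Λ T₁ T₂ ∩ T₃ = T₁ ∩ T₃ := by
  refine Set.Subset.antisymm (fun X ⟨hXJ, hX₃⟩ => ⟨?_, hX₃⟩)
    (Set.inter_subset_inter_left _ fun X hX V hV => hV.2.1 hX)
  exact (torsJoin_subset_hasFiltration h₁ h₂ hXJ).mem_left_of_inter_eq h₁ h₂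
    h₃.isQuotientClosed h hX₃

/-- The lattice of torsion classes of a finite-dimensional algebra `Λ`
over a field `k` is meet-semidistributive: if `𝒯₁ ∧ 𝒯₃ = 𝒯₂ ∧ 𝒯₃` then
`(𝒯₁ ∨ 𝒯₂) ∧ 𝒯₃ = 𝒯₁ ∧ 𝒯₃` (meet is intersection, join is `torsJoin`). -/
theorem stmt5 (k : Type u) [Field k] (Λ : Type u) [Ring Λ] [Algebra k Λ]
    [FiniteDimensional k Λ] (T₁ T₂ T₃ : Set (ModuleCat.{u} Λ))
    (h₁ : IsTorsionClass Λ T₁) (h₂ : IsTorsionClass Λ T₂) (h₃ : IsTorsionClass Λ T₃)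
    (h : T₁ ∩ T₃ = T₂ ∩ T₃) :
    torsJoin Λ T₁ T₂ ∩ T₃ = T₁ ∩ T₃ :=
  stmt5_general Λ T₁ T₂ T₃ h₁ h₂ h₃ h
end

section
/- Let Λ be a finite dimensional algebra. The lattice of torsion classes tors(Λ) is semidistributive, i.e., both meet-semidistributive and join-semidistributive. -/
/-!
Write `F(T)` for the torsion-free class `T^⊥` of a torsion class `T`. Over an artinian ring every
finitely generated module has finite length, and both halves are proved by induction on it.

Meet-semidistributivity: a nonzero `M ∈ (T₁ ∨ T₂) ∩ T₃` has a nonzero submodule `S` in `T₁` or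
in `T₂`, since otherwise `M ∈ F(T₁) ∩ F(T₂) = F(T₁ ∨ T₂)`. By induction `M / S ∈ T₁ ∩ T₃ = T₂ ∩ T₃`,
and closure under extensions puts `M` into `T₁` or `T₂`, hence into `T₁ ∩ T₃` either way.

Join-semidistributivity is the dual statement for torsion-free classes, since `T ↦ F(T)` is an
order-reversing injection with `F(T ∨ T') = F(T) ∩ F(T')`. It is proved by the same induction with
submodules and quotients exchanged: a nonzero `Y ∈ F(T₁ ∧ T₂)` is not in both `T₁` and `T₂`, so
one of the canonical sequences `0 → tᵢY → Y → Y / tᵢY → 0` has `Y / tᵢY ≠ 0` in `F(Tᵢ)`.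
-/

open CategoryTheory

universe u

namespace IsTorsionClass

variable {Λ : Type u} [Ring Λ] {T U : Set (ModuleCat.{u} Λ)}

lemma mem_of_surjective (hT : IsTorsionClass Λ T) {X Y : ModuleCat.{u} Λ} (hX : X ∈ T)
    (f : X →ₗ[Λ] Y) (hf : Function.Surjective f) : Y ∈ T :=
  hT.2.2.1 X Y hX (ModuleCat.ofHom f) hf

lemma mem_of_linearEquiv (hT : IsTorsionClass Λ T) {X Y : ModuleCat.{u} Λ} (e : X ≃ₗ[Λ] Y)
    (hX : X ∈ T) : Y ∈ T :=
  hT.mem_of_surjective hX e.toLinearMap e.surjective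

lemma mem_of_subsingleton (hT : IsTorsionClass Λ T) (X : ModuleCat.{u} Λ) [Subsingleton X] :
    X ∈ T :=
  hT.2.1 X inferInstance ‹_›

lemma mem_of_extension (hT : IsTorsionClass Λ T) {X : ModuleCat.{u} Λ} [Module.Finite Λ X]
    (N : Submodule Λ X) (hN : ModuleCat.of Λ N ∈ T) (hQ : ModuleCat.of Λ (X ⧸ N) ∈ T) : X ∈ T :=
  hT.2.2.2 X N ‹_› hN hQ

lemma map_mem (hT : IsTorsionClass Λ T) {X Y : ModuleCat.{u} Λ} {N : Submodule Λ X}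
    (hN : ModuleCat.of Λ N ∈ T) (f : X →ₗ[Λ] Y) : ModuleCat.of Λ (N.map f) ∈ T :=
  hT.mem_of_surjective hN (f.submoduleMap N) (f.submoduleMap_surjective N)

lemma top_mem_iff (hT : IsTorsionClass Λ T) {X : ModuleCat.{u} Λ} :
    ModuleCat.of Λ (⊤ : Submodule Λ X) ∈ T ↔ X ∈ T :=
  ⟨hT.mem_of_linearEquiv Submodule.topEquiv, hT.mem_of_linearEquiv Submodule.topEquiv.symm⟩

lemma inter (hT : IsTorsionClass Λ T) (hU : IsTorsionClass Λ U) :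
    IsTorsionClass Λ (T ∩ U) :=
  ⟨fun _ hX => hT.1 hX.1, fun X hfin hs => ⟨hT.2.1 X hfin hs, hU.2.1 X hfin hs⟩,
    fun X Y hX f hf => ⟨hT.2.2.1 X Y hX.1 f hf, hU.2.2.1 X Y hX.2 f hf⟩,
    fun X N hfin hN hQ => ⟨hT.2.2.2 X N hfin hN.1 hQ.1, hU.2.2.2 X N hfin hN.2 hQ.2⟩⟩

end IsTorsionClass

section Join

variable {Λ : Type u} [Ring Λ] {T U V : Set (ModuleCat.{u} Λ)}

lemma isTorsionClass_setOf_finite : IsTorsionClass Λ {X : ModuleCat.{u} Λ | Module.Finite Λ X} :=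
  ⟨subset_rfl, fun _ hfin _ => hfin,
    fun X _ (_ : Module.Finite Λ X) f hf => Module.Finite.of_surjective f.hom hf,
    fun _ _ hfin _ _ => hfin⟩

lemma isTorsionClass_torsJoin (hT : IsTorsionClass Λ T) (hU : IsTorsionClass Λ U) :
    IsTorsionClass Λ (torsJoin Λ T U) := by
  have mem {X} (hX : X ∈ torsJoin Λ T U) {V} (hV : IsTorsionClass Λ V ∧ T ⊆ V ∧ U ⊆ V) :
      X ∈ V := Set.mem_sInter.mp hX V hV
  refine ⟨fun X hX => mem hX ⟨isTorsionClass_setOf_finite, hT.1, hU.1⟩,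
    fun X hfin hs => Set.mem_sInter.mpr fun V hV => hV.1.2.1 X hfin hs,
    fun X Y hX f hf => Set.mem_sInter.mpr fun V hV => hV.1.2.2.1 X Y (mem hX hV) f hf,
    fun X N hfin hN hQ => Set.mem_sInter.mpr fun V hV =>
      hV.1.2.2.2 X N hfin (mem hN hV) (mem hQ hV)⟩

lemma subset_torsJoin_left : T ⊆ torsJoin Λ T U :=
  fun _ hX => Set.mem_sInter.mpr fun _ hV => hV.2.1 hX

lemma subset_torsJoin_right : U ⊆ torsJoin Λ T U :=
  fun _ hX => Set.mem_sInter.mpr fun _ hV => hV.2.2 hX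

lemma torsJoin_subset (hV : IsTorsionClass Λ V) (hTV : T ⊆ V) (hUV : U ⊆ V) :
    torsJoin Λ T U ⊆ V :=
  fun _ hX => Set.mem_sInter.mp hX V ⟨hV, hTV, hUV⟩

end Join

section Perp

variable {Λ : Type u} [Ring Λ] {T U : Set (ModuleCat.{u} Λ)}

/-- For a torsion class `T` this is the torsion-free class `T^⊥ = {Y | Hom(T, Y) = 0}`, since a
morphism from a module in `T` has its image in `T`. -/
def rightPerp (T : Set (ModuleCat.{u} Λ)) : Set (ModuleCat.{u} Λ) :=
  {Y | Module.Finite Λ Y ∧ ∀ N : Submodule Λ Y, ModuleCat.of Λ N ∈ T → N = ⊥}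

def leftPerp (F : Set (ModuleCat.{u} Λ)) : Set (ModuleCat.{u} Λ) :=
  {X | Module.Finite Λ X ∧ ∀ Y ∈ F, ∀ f : X →ₗ[Λ] Y, f = 0}

lemma rightPerp_anti {T' : Set (ModuleCat.{u} Λ)} (h : T ⊆ T') : rightPerp T' ⊆ rightPerp T :=
  fun _ hY => ⟨hY.1, fun N hN => hY.2 N (h hN)⟩

lemma mem_rightPerp_of_subsingleton {Y : ModuleCat.{u} Λ} [Subsingleton Y] : Y ∈ rightPerp T :=
  ⟨inferInstance, fun _ _ => Subsingleton.elim _ _⟩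

lemma subsingleton_of_mem_rightPerp (hT : IsTorsionClass Λ T) {X : ModuleCat.{u} Λ}
    (hX : X ∈ T) (hX' : X ∈ rightPerp T) : Subsingleton X := by
  rw [← Submodule.subsingleton_iff Λ, ← subsingleton_iff_bot_eq_top]
  exact (hX'.2 ⊤ (hT.top_mem_iff.mpr hX)).symm

lemma IsTorsionClass.subset_leftPerp (hT : IsTorsionClass Λ T) {F : Set (ModuleCat.{u} Λ)}
    (hF : F ⊆ rightPerp T) : T ⊆ leftPerp F := by
  refine fun X hX => ⟨hT.1 hX, fun Y hY f => ?_⟩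
  have hf : ModuleCat.of Λ (LinearMap.range f) ∈ T :=
    hT.mem_of_surjective hX f.rangeRestrict f.surjective_rangeRestrict
  exact LinearMap.range_eq_bot.mp ((hF hY).2 _ hf)

lemma isTorsionClass_leftPerp (F : Set (ModuleCat.{u} Λ)) : IsTorsionClass Λ (leftPerp F) := by
  refine ⟨fun X hX => hX.1, fun X hfin _ => ⟨hfin, fun Y _ f => Subsingleton.elim _ _⟩, ?_, ?_⟩
  · intro X Y hX f hf
    have : Module.Finite Λ X := hX.1
    refine ⟨Module.Finite.of_surjective f.hom hf, fun Z hZ g => ?_⟩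
    exact (LinearMap.cancel_right hf).mp (by rw [hX.2 Z hZ (g ∘ₗ f.hom), LinearMap.zero_comp])
  · intro X N hfin hN hQ
    refine ⟨hfin, fun Y hY f => ?_⟩
    have hle : N ≤ LinearMap.ker f :=
      fun x hx => LinearMap.congr_fun (hN.2 Y hY (f ∘ₗ N.subtype)) ⟨x, hx⟩
    rw [← N.liftQ_mkQ f hle, hQ.2 Y hY (N.liftQ f hle), LinearMap.zero_comp]

lemma IsTorsionClass.rightPerp_torsJoin (hT : IsTorsionClass Λ T) (hU : IsTorsionClass Λ U) :
    rightPerp (torsJoin Λ T U) = rightPerp T ∩ rightPerp U := by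
  refine subset_antisymm (fun Y hY => ⟨rightPerp_anti subset_torsJoin_left hY,
    rightPerp_anti subset_torsJoin_right hY⟩) fun Y hY => ⟨hY.1.1, fun N hN => ?_⟩
  have hJ : torsJoin Λ T U ⊆ leftPerp (rightPerp T ∩ rightPerp U) :=
    torsJoin_subset (isTorsionClass_leftPerp _) (hT.subset_leftPerp Set.inter_subset_left)
      (hU.subset_leftPerp Set.inter_subset_right)
  have h0 : N.subtype = 0 := (hJ hN).2 Y hY N.subtype
  rw [eq_bot_iff]
  exact fun x hx => LinearMap.congr_fun h0 ⟨x, hx⟩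

lemma IsTorsionClass.submodule_mem_rightPerp (hT : IsTorsionClass Λ T) {Y : ModuleCat.{u} Λ}
    (hY : Y ∈ rightPerp T) (K : Submodule Λ Y) [Module.Finite Λ K] :
    ModuleCat.of Λ K ∈ rightPerp T := by
  refine ⟨inferInstance, fun S hS => ?_⟩
  have hS' : ModuleCat.of Λ (S.map K.subtype) ∈ T :=
    hT.mem_of_linearEquiv (S.equivMapOfInjective _ K.injective_subtype) hS
  exact Submodule.map_injective_of_injective K.injective_subtype
    ((hY.2 _ hS').trans (Submodule.map_bot _).symm)

lemma IsTorsionClass.mem_rightPerp_of_extension (hT : IsTorsionClass Λ T) {Y : ModuleCat.{u} Λ}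
    [Module.Finite Λ Y] (K : Submodule Λ Y) (hK : ModuleCat.of Λ K ∈ rightPerp T)
    (hQ : ModuleCat.of Λ (Y ⧸ K) ∈ rightPerp T) : Y ∈ rightPerp T := by
  refine ⟨inferInstance, fun N hN => ?_⟩
  have hNK : N ≤ K := by
    simpa using LinearMap.le_ker_iff_map.mpr (hQ.2 _ (hT.map_mem hN K.mkQ))
  have hN' : ModuleCat.of Λ (N.comap K.subtype) ∈ T :=
    hT.mem_of_linearEquiv (Submodule.comapSubtypeEquivOfLe hNK).symm hN
  rw [← inf_eq_right.mpr hNK, ← Submodule.map_comap_subtype, hK.2 _ hN', Submodule.map_bot]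

lemma exists_ne_bot_mem_of_mem_torsJoin (hT : IsTorsionClass Λ T) (hU : IsTorsionClass Λ U)
    {M : ModuleCat.{u} Λ} [Nontrivial M] (hM : M ∈ torsJoin Λ T U) :
    ∃ S : Submodule Λ M, S ≠ ⊥ ∧ (ModuleCat.of Λ S ∈ T ∨ ModuleCat.of Λ S ∈ U) := by
  by_contra! h
  have hfin : Module.Finite Λ M := (isTorsionClass_torsJoin hT hU).1 hM
  have hM' : M ∈ rightPerp (torsJoin Λ T U) := by
    rw [hT.rightPerp_torsJoin hU]
    exact ⟨⟨hfin, fun S hS => by_contra fun hne => (h S hne).1 hS⟩,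
      ⟨hfin, fun S hS => by_contra fun hne => (h S hne).2 hS⟩⟩
  exact not_subsingleton M (subsingleton_of_mem_rightPerp (isTorsionClass_torsJoin hT hU) hM hM')

end Perp

section Noetherian

variable {Λ : Type u} [Ring Λ] {T U : Set (ModuleCat.{u} Λ)}

lemma IsTorsionClass.exists_submodule_mem_quotient_mem_rightPerp (hT : IsTorsionClass Λ T)
    (X : ModuleCat.{u} Λ) [IsNoetherian Λ X] :
    ∃ N : Submodule Λ X, ModuleCat.of Λ N ∈ T ∧ ModuleCat.of Λ (X ⧸ N) ∈ rightPerp T := by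
  obtain ⟨N, hN, hmax⟩ := set_has_maximal_iff_noetherian.mpr ‹_›
    {N : Submodule Λ X | ModuleCat.of Λ N ∈ T} ⟨⊥, hT.mem_of_subsingleton _⟩
  refine ⟨N, hN, inferInstance, fun S hS => ?_⟩
  set P := S.comap N.mkQ
  have hNP : N ≤ P := fun x hx => by simp [P, (Submodule.Quotient.mk_eq_zero N).mpr hx]
  let φ : P →ₗ[Λ] S := (N.mkQ ∘ₗ P.subtype).codRestrict S fun x => x.2
  have hφ : Function.Surjective φ := by
    rintro ⟨s, hs⟩
    obtain ⟨x, rfl⟩ := N.mkQ_surjective s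
    exact ⟨⟨x, hs⟩, rfl⟩
  have hker : LinearMap.ker φ = N.comap P.subtype := by
    ext x
    exact Subtype.ext_iff.trans (Submodule.Quotient.mk_eq_zero N)
  have hPT : ModuleCat.of Λ P ∈ T := by
    refine hT.mem_of_extension (N.comap P.subtype)
      (hT.mem_of_linearEquiv (Submodule.comapSubtypeEquivOfLe hNP).symm hN) ?_
    exact hT.mem_of_linearEquiv (hker ▸ φ.quotKerEquivOfSurjective hφ).symm hS
  have hPN : P = N := by_contra fun hne => hmax P hPT (lt_of_le_of_ne hNP (Ne.symm hne))
  rw [eq_bot_iff]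
  rintro s hs
  obtain ⟨x, rfl⟩ := N.mkQ_surjective s
  have hx : x ∈ N := hPN ▸ hs
  simpa using hx

variable [IsNoetherianRing Λ]

lemma IsTorsionClass.leftPerp_rightPerp_subset (hT : IsTorsionClass Λ T) :
    leftPerp (rightPerp T) ⊆ T := by
  intro X ⟨hfin, hX⟩
  obtain ⟨N, hN, hQ⟩ := hT.exists_submodule_mem_quotient_mem_rightPerp X
  have hNtop : N = ⊤ := by
    simpa using (LinearMap.ker_eq_top.mpr (hX _ hQ N.mkQ))
  exact hT.top_mem_iff.mp (hNtop ▸ hN)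

lemma IsTorsionClass.subset_of_rightPerp_subset (hT : IsTorsionClass Λ T)
    (hU : IsTorsionClass Λ U) (h : rightPerp U ⊆ rightPerp T) : T ⊆ U :=
  (hT.subset_leftPerp h).trans hU.leftPerp_rightPerp_subset

lemma exists_ne_top_quotient_mem_rightPerp (hT : IsTorsionClass Λ T) (hU : IsTorsionClass Λ U)
    {Y : ModuleCat.{u} Λ} [Nontrivial Y] (hY : Y ∈ rightPerp (T ∩ U)) :
    ∃ N : Submodule Λ Y, N ≠ ⊤ ∧
      (ModuleCat.of Λ (Y ⧸ N) ∈ rightPerp T ∨ ModuleCat.of Λ (Y ⧸ N) ∈ rightPerp U) := by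
  have : Module.Finite Λ Y := hY.1
  obtain ⟨N, hN, hNQ⟩ := hT.exists_submodule_mem_quotient_mem_rightPerp Y
  obtain ⟨N', hN', hN'Q⟩ := hU.exists_submodule_mem_quotient_mem_rightPerp Y
  by_cases hNtop : N = ⊤
  · by_cases hN'top : N' = ⊤
    · have hYTU : Y ∈ T ∩ U :=
        ⟨hT.top_mem_iff.mp (hNtop ▸ hN), hU.top_mem_iff.mp (hN'top ▸ hN')⟩
      exact absurd (subsingleton_of_mem_rightPerp (hT.inter hU) hYTU hY) (not_subsingleton Y)
    · exact ⟨N', hN'top, Or.inr hN'Q⟩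
  · exact ⟨N, hNtop, Or.inl hNQ⟩

end Noetherian

section Semidistributive

variable {Λ : Type u} [Ring Λ] {T₁ T₂ T₃ : Set (ModuleCat.{u} Λ)}

lemma ModuleCat.length_induction {P : ModuleCat.{u} Λ → Prop}
    (h : ∀ M : ModuleCat.{u} Λ,
      (∀ N : ModuleCat.{u} Λ, Module.length Λ N < Module.length Λ M → P N) → P M)
    (M : ModuleCat.{u} Λ) : P M :=
  (InvImage.wf (fun M : ModuleCat.{u} Λ => Module.length Λ M) wellFounded_lt).induction M h

variable [IsArtinianRing Λ]

theorem torsJoin_inter_eq_of_inter_eq (h₁ : IsTorsionClass Λ T₁) (h₂ : IsTorsionClass Λ T₂)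
    (h₃ : IsTorsionClass Λ T₃) (h : T₁ ∩ T₃ = T₂ ∩ T₃) :
    torsJoin Λ T₁ T₂ ∩ T₃ = T₁ ∩ T₃ := by
  refine subset_antisymm (fun M hM => ⟨?_, hM.2⟩)
    fun M hM => ⟨subset_torsJoin_left hM.1, hM.2⟩
  induction M using ModuleCat.length_induction with | h M ih =>
  obtain ⟨hMJ, hM₃⟩ := hM
  have : Module.Finite Λ M := h₃.1 hM₃
  cases subsingleton_or_nontrivial M
  · exact h₁.mem_of_subsingleton M
  obtain ⟨S, hS, hST⟩ := exists_ne_bot_mem_of_mem_torsJoin h₁ h₂ hMJ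
  have hQ : ModuleCat.of Λ (M ⧸ S) ∈ T₁ ∩ T₃ := by
    refine ⟨ih _ (S.length_quotient_lt hS) ⟨?_, ?_⟩, ?_⟩
    · exact (isTorsionClass_torsJoin h₁ h₂).mem_of_surjective hMJ S.mkQ S.mkQ_surjective
    all_goals exact h₃.mem_of_surjective hM₃ S.mkQ S.mkQ_surjective
  rcases hST with hS₁ | hS₂
  · exact h₁.mem_of_extension S hS₁ hQ.1
  · have hM₂ : M ∈ T₂ ∩ T₃ := ⟨h₂.mem_of_extension S hS₂ (h ▸ hQ).1, hM₃⟩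
    exact (h ▸ hM₂).1

lemma rightPerp_inter_subset_of_inter_eq (h₁ : IsTorsionClass Λ T₁) (h₂ : IsTorsionClass Λ T₂)
    (h₃ : IsTorsionClass Λ T₃) (h : rightPerp T₁ ∩ rightPerp T₃ = rightPerp T₂ ∩ rightPerp T₃) :
    rightPerp (T₁ ∩ T₂) ∩ rightPerp T₃ ⊆ rightPerp T₁ := by
  intro Y hY
  induction Y using ModuleCat.length_induction with | h Y ih =>
  obtain ⟨hY₁₂, hY₃⟩ := hY
  have : Module.Finite Λ Y := hY₃.1
  cases subsingleton_or_nontrivial Y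
  · exact mem_rightPerp_of_subsingleton
  obtain ⟨N, hN, hNQ⟩ := exists_ne_top_quotient_mem_rightPerp h₁ h₂ hY₁₂
  have hK : ModuleCat.of Λ N ∈ rightPerp T₁ ∩ rightPerp T₃ :=
    ⟨ih _ (Submodule.length_lt hN) ⟨(h₁.inter h₂).submodule_mem_rightPerp hY₁₂ N,
      h₃.submodule_mem_rightPerp hY₃ N⟩, h₃.submodule_mem_rightPerp hY₃ N⟩
  rcases hNQ with hQ₁ | hQ₂
  · exact h₁.mem_rightPerp_of_extension N hK.1 hQ₁
  · have hY₂ : Y ∈ rightPerp T₂ ∩ rightPerp T₃ :=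
      ⟨h₂.mem_rightPerp_of_extension N (h ▸ hK).1 hQ₂, hY₃⟩
    exact (h ▸ hY₂).1

theorem torsJoin_inter_eq_of_torsJoin_eq (h₁ : IsTorsionClass Λ T₁) (h₂ : IsTorsionClass Λ T₂)
    (h₃ : IsTorsionClass Λ T₃) (h : torsJoin Λ T₁ T₃ = torsJoin Λ T₂ T₃) :
    torsJoin Λ (T₁ ∩ T₂) T₃ = torsJoin Λ T₁ T₃ := by
  have h₁₂ := h₁.inter h₂
  have hperp : rightPerp T₁ ∩ rightPerp T₃ = rightPerp T₂ ∩ rightPerp T₃ := by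
    rw [← h₁.rightPerp_torsJoin h₃, ← h₂.rightPerp_torsJoin h₃, h]
  refine subset_antisymm (torsJoin_subset (isTorsionClass_torsJoin h₁ h₃)
    (Set.inter_subset_left.trans subset_torsJoin_left) subset_torsJoin_right) ?_
  refine (isTorsionClass_torsJoin h₁ h₃).subset_of_rightPerp_subset
    (isTorsionClass_torsJoin h₁₂ h₃) ?_
  rw [h₁.rightPerp_torsJoin h₃, h₁₂.rightPerp_torsJoin h₃]
  exact fun Y hY => ⟨rightPerp_inter_subset_of_inter_eq h₁ h₂ h₃ hperp hY, hY.2⟩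

end Semidistributive

/-- For a finite-dimensional algebra `Λ`, the lattice `tors(Λ)` is
semidistributive: both meet-semidistributive and join-semidistributive
(meet is intersection, join is `torsJoin`). -/
theorem stmt6 (k : Type u) [Field k] (Λ : Type u) [Ring Λ] [Algebra k Λ]
    [FiniteDimensional k Λ] :
    (∀ T₁ T₂ T₃ : Set (ModuleCat.{u} Λ),
      IsTorsionClass Λ T₁ → IsTorsionClass Λ T₂ → IsTorsionClass Λ T₃ →
      T₁ ∩ T₃ = T₂ ∩ T₃ → torsJoin Λ T₁ T₂ ∩ T₃ = T₁ ∩ T₃) ∧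
    (∀ T₁ T₂ T₃ : Set (ModuleCat.{u} Λ),
      IsTorsionClass Λ T₁ → IsTorsionClass Λ T₂ → IsTorsionClass Λ T₃ →
      torsJoin Λ T₁ T₃ = torsJoin Λ T₂ T₃ →
      torsJoin Λ (T₁ ∩ T₂) T₃ = torsJoin Λ T₁ T₃) := by
  have : IsArtinianRing Λ := IsArtinianRing.of_finite k Λ
  exact ⟨fun _ _ _ => torsJoin_inter_eq_of_inter_eq, fun _ _ _ => torsJoin_inter_eq_of_torsJoin_eq⟩
end

section
/- Let G be a graph and AP its set of acyclic paths (considered up to reversal), with the closure operator generated by concatenation of composable acyclic paths. If X ⊆ AP is biclosed, p ∈ X, and p = q ∘ q' is a decomposition into composable acyclic paths, then q ∈ X or q' ∈ X; consequently the poset Bic(AP) of biclosed sets is ordered by single-step inclusion: if X, Y are biclosed with X ⊊ Y, there exists p₀ ∈ Y \ X such that X ∪ {p₀} is biclosed. -/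
/-!
The first claim is closedness of `AP \ X`. For `X ⊊ Y`, consider the paths `s ∈ Y \ X` every
factorization of which into two acyclic paths has a factor in `X` (`FactorsMeet G X s`). A
shortest path of `Y \ X` is one (by the first claim for `Y`), and since `AP` is finite there is a
longest one, `p₀`. Then `X ∪ {p₀, p₀ʳ}` is biclosed: its complement is closed because `p₀` and
`p₀ʳ` satisfy `FactorsMeet`, and `p ++ p₀ ∈ X` for `p ∈ X`, since otherwise `p ++ p₀` would be a
longer such path.
-/

variable {V : Type*}

/-- A list of vertices is an acyclic path in `G`: it is nonempty, consecutive
vertices are adjacent, and vertices at distance `≥ 2` along the path are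
non-adjacent. -/
def IsAcyclicPath (G : SimpleGraph V) (l : List V) : Prop :=
  l ≠ [] ∧ l.Chain' G.Adj ∧
    ∀ (i j : ℕ) (hi : i < l.length) (hj : j < l.length),
      i + 2 ≤ j → ¬ G.Adj (l.get ⟨i, hi⟩) (l.get ⟨j, hj⟩)

/-- The set of acyclic paths of `G`. -/
def AP (G : SimpleGraph V) : Set (List V) := {l | IsAcyclicPath G l}

/-- A set of paths closed under reversal (paths are considered up to reversal). -/
def RevClosed (X : Set (List V)) : Prop := ∀ l ∈ X, l.reverse ∈ X

/-- A set of acyclic paths closed under concatenation: if `p, p' ∈ X` and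
`p ∘ p'` is an acyclic path, then `p ∘ p' ∈ X`. -/
def PathClosed (G : SimpleGraph V) (X : Set (List V)) : Prop :=
  ∀ p ∈ X, ∀ q ∈ X, IsAcyclicPath G (p ++ q) → p ++ q ∈ X

/-- A biclosed set of acyclic paths (invariant under reversal): both `X` and its
complement in `AP` are closed. -/
def PathBiclosed (G : SimpleGraph V) (X : Set (List V)) : Prop :=
  X ⊆ AP G ∧ RevClosed X ∧ PathClosed G X ∧ PathClosed G (AP G \ X)

/-- The closure of a set of acyclic paths: the smallest closed set containing it. -/
def PathClosure (G : SimpleGraph V) (S : Set (List V)) : Set (List V) :=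
  ⋂₀ {T | S ⊆ T ∧ PathClosed G T}

variable {G : SimpleGraph V}

namespace IsAcyclicPath

variable {l a b : List V}

theorem ne_nil (h : IsAcyclicPath G l) : l ≠ [] := h.1

theorem adj_getElem (h : IsAcyclicPath G l) {i : ℕ} (hi : i + 1 < l.length) :
    G.Adj l[i] l[i + 1] :=
  List.isChain_iff_getElem.mp h.2.1 i hi

theorem not_adj_getElem (h : IsAcyclicPath G l) {i j : ℕ} (hij : i + 2 ≤ j)
    (hj : j < l.length) : ¬ G.Adj l[i] l[j] :=
  h.2.2 i j (by omega) hj hij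

theorem of_append_left (h : IsAcyclicPath G (a ++ b)) (ha : a ≠ []) : IsAcyclicPath G a := by
  refine ⟨ha, (List.isChain_append.mp h.2.1).1, fun i j hi hj hij => ?_⟩
  have := h.not_adj_getElem hij (by simp; omega)
  simpa [List.getElem_append_left hi, List.getElem_append_left hj] using this

theorem of_append_right (h : IsAcyclicPath G (a ++ b)) (hb : b ≠ []) : IsAcyclicPath G b := by
  refine ⟨hb, (List.isChain_append.mp h.2.1).2.1, fun i j hi hj hij => ?_⟩
  have := h.not_adj_getElem (i := a.length + i) (j := a.length + j) (by omega) (by simp; omega)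
  simpa [List.getElem_append_right] using this

theorem reverse (h : IsAcyclicPath G l) : IsAcyclicPath G l.reverse := by
  refine ⟨by simpa using h.ne_nil, List.isChain_reverse.mpr (h.2.1.imp fun _ _ hab => hab.symm),
    fun i j hi hj hij hadj => ?_⟩
  simp only [List.length_reverse, List.get_eq_getElem, List.getElem_reverse] at hi hj hadj
  exact h.not_adj_getElem (i := l.length - 1 - j) (j := l.length - 1 - i) (by omega) (by omega)
    hadj.symm

/-- `[x, y, x]` is acyclic, so `l` itself need not be duplicate-free. -/
theorem nodup_dropLast (h : IsAcyclicPath G l) : l.dropLast.Nodup := by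
  refine List.pairwise_iff_getElem.mpr fun i j hi hj hij heq => ?_
  simp only [List.length_dropLast, List.getElem_dropLast] at hj heq
  rcases Nat.lt_or_ge (i + 1) j with hlt | hle
  · exact h.not_adj_getElem (i := i) (j := j + 1) (by omega) (by omega)
      (heq ▸ h.adj_getElem (i := j) (by omega))
  · obtain rfl : j = i + 1 := by omega
    exact G.irrefl (heq ▸ h.adj_getElem (i := i) (by omega))

theorem length_le_card_add_one [Fintype V] (h : IsAcyclicPath G l) :
    l.length ≤ Fintype.card V + 1 := by
  have := h.nodup_dropLast.length_le_card
  rw [List.length_dropLast] at this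
  omega

end IsAcyclicPath

theorem finite_AP [Finite V] : (AP G).Finite := by
  have := Fintype.ofFinite V
  exact (List.finite_length_le V _).subset fun _ h => IsAcyclicPath.length_le_card_add_one h

theorem not_isAcyclicPath_append_self {u : List V} (hu : IsAcyclicPath G u) :
    ¬ IsAcyclicPath G (u ++ u) := by
  intro h
  rcases u with _ | ⟨x, _ | ⟨y, t⟩⟩
  · exact hu.ne_nil rfl
  · exact G.irrefl (h.adj_getElem (i := 0) (by simp))
  · apply h.not_adj_getElem (i := 0) (j := t.length + 3) (by omega) (by simp)
    simpa using hu.adj_getElem (i := 0) (by simp)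

theorem not_isAcyclicPath_append_reverse {u : List V} (hu : u ≠ []) :
    ¬ IsAcyclicPath G (u ++ u.reverse) := by
  intro h
  have hpos := List.length_pos_iff.mpr hu
  have := h.adj_getElem (i := u.length - 1) (by simp; omega)
  rw [List.getElem_append_left (by omega), List.getElem_append_right (by omega)] at this
  simp only [List.getElem_reverse, show u.length - 1 + 1 - u.length = 0 by omega,
    Nat.sub_zero] at this
  exact G.irrefl this

theorem RevClosed.reverse_mem_iff {X : Set (List V)} (hX : RevClosed X) {l : List V} :
    l.reverse ∈ X ↔ l ∈ X :=
  ⟨fun h => l.reverse_reverse ▸ hX _ h, hX l⟩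

def FactorsMeet (G : SimpleGraph V) (X : Set (List V)) (s : List V) : Prop :=
  ∀ a b, IsAcyclicPath G a → IsAcyclicPath G b → s = a ++ b → a ∈ X ∨ b ∈ X

variable {X Y : Set (List V)} {s : List V}

theorem FactorsMeet.reverse (hX : RevClosed X) (hs : FactorsMeet G X s) :
    FactorsMeet G X s.reverse := by
  intro a b ha hb hab
  have := hs b.reverse a.reverse hb.reverse ha.reverse
    (by rw [← List.reverse_append, ← hab, List.reverse_reverse])
  rwa [hX.reverse_mem_iff, hX.reverse_mem_iff, or_comm] at this

theorem PathBiclosed.factorsMeet (hX : PathBiclosed G X) (hs : s ∈ X) : FactorsMeet G X s := by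
  rintro a b ha hb rfl
  by_contra! h
  exact (hX.2.2.2 a ⟨ha, h.1⟩ b ⟨hb, h.2⟩ (hX.1 hs)).2 hs

theorem exists_factorsMeet_of_sdiff_nonempty (hY : PathBiclosed G Y) (hYX : (Y \ X).Nonempty) :
    ∃ s ∈ Y \ X, FactorsMeet G X s := by
  obtain ⟨s, hs, hmin⟩ := (measure List.length).wf.has_min _ hYX
  refine ⟨s, hs, fun a b ha hb hab => ?_⟩
  have ha_short : a.length < s.length := by simp [hab, List.length_pos_iff.mpr hb.ne_nil]
  have hb_short : b.length < s.length := by simp [hab, List.length_pos_iff.mpr ha.ne_nil]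
  by_contra! h
  rcases hY.factorsMeet hs.1 a b ha hb hab with haY | hbY
  · exact hmin a ⟨haY, h.1⟩ ha_short
  · exact hmin b ⟨hbY, h.2⟩ hb_short

/-- Factorizations of `p ++ s` that cut `p` are handled by induction on the length of `p`. -/
theorem append_mem_of_factorsMeet_of_maximal (hX : PathBiclosed G X) (hXY : X ⊆ Y)
    (hY : PathClosed G Y) (hs : s ∈ Y) (hsX : FactorsMeet G X s)
    (hmax : ∀ t ∈ Y \ X, FactorsMeet G X t → t.length ≤ s.length)
    {p : List V} (hp : p ∈ X) (hps : IsAcyclicPath G (p ++ s)) : p ++ s ∈ X := by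
  induction hn : p.length using Nat.strong_induction_on generalizing p with
  | _ n ih =>
  by_contra hpsX
  have hfac : FactorsMeet G X (p ++ s) := by
    intro a b ha hb hab
    rcases List.append_eq_append_iff.mp hab with ⟨c, rfl, hsc⟩ | ⟨c, hpac, rfl⟩
    · rcases eq_or_ne c [] with rfl | hc
      · simpa using Or.inl hp
      rcases hsX c b (ha.of_append_right hc) hb hsc with hcX | hbX
      · exact Or.inl (hX.2.2.1 p hp c hcX ha)
      · exact Or.inr hbX
    · rcases eq_or_ne c [] with rfl | hc
      · exact Or.inl (by simpa [hpac] using hp)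
      rcases hX.factorsMeet hp a c ha (hb.of_append_left hc) hpac with haX | hcX
      · exact Or.inl haX
      · refine Or.inr (ih c.length ?_ hcX hb rfl)
        simp [← hn, hpac, List.length_pos_iff.mpr ha.ne_nil]
  have := hmax _ ⟨hY p (hXY hp) s hs hps, hpsX⟩ hfac
  exact (hX.1 hp).ne_nil (by simpa using this)

theorem PathBiclosed.union (hX : PathBiclosed G X) {T : Set (List V)} (hTAP : T ⊆ AP G)
    (hTrev : RevClosed T) (hTT : ∀ t ∈ T, ∀ t' ∈ T, ¬ IsAcyclicPath G (t ++ t'))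
    (hTfac : ∀ t ∈ T, FactorsMeet G X t)
    (hXT : ∀ p ∈ X, ∀ t ∈ T, IsAcyclicPath G (p ++ t) → p ++ t ∈ X) :
    PathBiclosed G (X ∪ T) := by
  have hTX : ∀ t ∈ T, ∀ p ∈ X, IsAcyclicPath G (t ++ p) → t ++ p ∈ X := by
    intro t ht p hp h
    rw [← hX.2.1.reverse_mem_iff, List.reverse_append]
    exact hXT _ (hX.2.1 p hp) _ (hTrev t ht) (by simpa using h.reverse)
  refine ⟨Set.union_subset hX.1 hTAP, ?_, ?_, ?_⟩
  · rintro l (hl | hl)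
    exacts [Or.inl (hX.2.1 l hl), Or.inr (hTrev l hl)]
  · rintro p (hp | hp) q (hq | hq) h
    · exact Or.inl (hX.2.2.1 p hp q hq h)
    · exact Or.inl (hXT p hp q hq h)
    · exact Or.inl (hTX p hp q hq h)
    · exact (hTT p hp q hq h).elim
  · rintro p ⟨hp, hpXT⟩ q ⟨hq, hqXT⟩ h
    rw [Set.mem_union, not_or] at hpXT hqXT
    refine ⟨h, ?_⟩
    rintro (hpqX | hpqT)
    · exact (hX.2.2.2 p ⟨hp, hpXT.1⟩ q ⟨hq, hqXT.1⟩ h).2 hpqX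
    · rcases hTfac _ hpqT p q hp hq rfl with hpX | hqX
      exacts [hpXT.1 hpX, hqXT.1 hqX]

/-- If `X ⊆ AP` is biclosed, `p ∈ X` and `p = q ∘ q'` is a
decomposition into composable acyclic paths, then `q ∈ X` or `q' ∈ X`.
Consequently `Bic(AP)` is ordered by single-step inclusion: if `X ⊊ Y` are
biclosed there is `p₀ ∈ Y \ X` with `X ∪ {p₀}` (up to reversal) biclosed. -/
theorem stmt10 [Fintype V] (G : SimpleGraph V) :
    (∀ X : Set (List V), PathBiclosed G X → ∀ p q q' : List V, p ∈ X →
      p = q ++ q' → IsAcyclicPath G q → IsAcyclicPath G q' → q ∈ X ∨ q' ∈ X) ∧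
    (∀ X Y : Set (List V), PathBiclosed G X → PathBiclosed G Y → X ⊂ Y →
      ∃ p₀ ∈ Y \ X, PathBiclosed G (X ∪ {p₀, p₀.reverse})) := by
  refine ⟨fun X hX p q q' hp hpq hq hq' => hX.factorsMeet hp q q' hq hq' hpq, ?_⟩
  intro X Y hX hY hXY
  obtain ⟨p₀, ⟨hp₀YX, hp₀fac⟩, hmax⟩ := Set.exists_max_image {s ∈ Y \ X | FactorsMeet G X s}
    List.length (finite_AP.subset fun s hs => hY.1 hs.1.1)
    (exists_factorsMeet_of_sdiff_nonempty hY (Set.sdiff_nonempty.mpr hXY.2))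
  have hp₀ : IsAcyclicPath G p₀ := hY.1 hp₀YX.1
  have hmax' : ∀ t ∈ Y \ X, FactorsMeet G X t → t.length ≤ p₀.length :=
    fun t ht htX => hmax t ⟨ht, htX⟩
  refine ⟨p₀, hp₀YX, hX.union ?_ ?_ ?_ ?_ ?_⟩
  · simp [Set.insert_subset_iff, AP, hp₀, hp₀.reverse]
  · rintro l (rfl | rfl) <;> simp
  · simp only [Set.mem_insert_iff, Set.mem_singleton_iff, forall_eq_or_imp, forall_eq]
    refine ⟨⟨not_isAcyclicPath_append_self hp₀, not_isAcyclicPath_append_reverse hp₀.ne_nil⟩,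
      ?_, not_isAcyclicPath_append_self hp₀.reverse⟩
    simpa using not_isAcyclicPath_append_reverse (G := G) hp₀.reverse.ne_nil
  · simpa using ⟨hp₀fac, hp₀fac.reverse hX.2.1⟩
  · intro p hp
    simp only [Set.mem_insert_iff, Set.mem_singleton_iff, forall_eq_or_imp, forall_eq]
    exact ⟨append_mem_of_factorsMeet_of_maximal hX hXY.1 hY.2.2.1 hp₀YX.1 hp₀fac hmax' hp,
      append_mem_of_factorsMeet_of_maximal hX hXY.1 hY.2.2.1 (hY.2.1 _ hp₀YX.1)
        (hp₀fac.reverse hX.2.1) (by simpa using hmax') hp⟩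
end

section
/- Let P be a poset and I = [x, y] a closed interval of P. Then the doubling P[I], defined as the induced subposet of P × {0,1} with elements (P_{≤y} × {0}) ⊔ ((P \ P_{≤y}) ∪ I) × {1}, is a lattice whenever P is a lattice. -/
/-- The underlying set of the doubling `P[I]` of a lattice `P` at the interval
`I = [x, y]`: the subposet of `P × {0,1}` on `(P_{≤y} × {0}) ⊔ ((P \ P_{≤y}) ∪ I) × {1}`
(where `Bool` is ordered by `false < true`). -/
def DoublingSet {L : Type*} [Lattice L] (x y : L) : Set (L × Bool) :=
  {p | (p.2 = false ∧ p.1 ≤ y) ∨ (p.2 = true ∧ (¬ p.1 ≤ y ∨ (x ≤ p.1 ∧ p.1 ≤ y)))}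

/-- If `P` is a lattice and `I = [x, y]` a closed interval, then the
doubling `P[I]` is a lattice: every pair of elements has a least upper bound and a
greatest lower bound in `P[I]`. -/
theorem stmt13 {L : Type*} [Lattice L] (x y : L) (hxy : x ≤ y) :
    ∀ a b : DoublingSet x y,
      (∃ c : DoublingSet x y, IsLeast {d : DoublingSet x y | a ≤ d ∧ b ≤ d} c) ∧
      (∃ c : DoublingSet x y, IsGreatest {d : DoublingSet x y | d ≤ a ∧ d ≤ b} c) := by
  have hfalse : ∀ r : L, ((r, false) : L × Bool) ∈ DoublingSet x y → r ≤ y := by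
    rintro r (⟨-, h⟩ | ⟨h, -⟩)
    · exact h
    · simp at h
  have htrue : ∀ r : L, ((r, true) : L × Bool) ∈ DoublingSet x y →
      ¬ r ≤ y ∨ (x ≤ r ∧ r ≤ y) := by
    rintro r (⟨h, -⟩ | ⟨-, h⟩)
    · simp at h
    · exact h
  rintro ⟨⟨p, s⟩, hp⟩ ⟨⟨q, t⟩, hq⟩
  constructor
  · -- join
    have hmem : ((p, s) ⊔ (q, t) : L × Bool) ∈ DoublingSet x y := by
      have htrue_case : ∀ r : L, ((r, true) : L × Bool) ∈ DoublingSet x y →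
          r ≤ p ⊔ q → ¬ p ⊔ q ≤ y ∨ (x ≤ p ⊔ q ∧ p ⊔ q ≤ y) := by
        intro r hr hrpq
        by_cases h : p ⊔ q ≤ y
        · rcases htrue r hr with h' | ⟨h1, -⟩
          · exact absurd (hrpq.trans h) h'
          · exact Or.inr ⟨h1.trans hrpq, h⟩
        · exact Or.inl h
      cases s <;> cases t
      · exact Or.inl ⟨rfl, sup_le (hfalse p hp) (hfalse q hq)⟩
      · exact Or.inr ⟨rfl, htrue_case q hq le_sup_right⟩
      · exact Or.inr ⟨rfl, htrue_case p hp le_sup_left⟩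
      · exact Or.inr ⟨rfl, htrue_case p hp le_sup_left⟩
    refine ⟨⟨_, hmem⟩, ⟨?_, ?_⟩, ?_⟩
    · exact Subtype.mk_le_mk.mpr le_sup_left
    · exact Subtype.mk_le_mk.mpr le_sup_right
    · rintro ⟨⟨r, u⟩, hr⟩ ⟨h1, h2⟩
      exact Subtype.mk_le_mk.mpr
        (sup_le (Subtype.mk_le_mk.mp h1) (Subtype.mk_le_mk.mp h2))
  · -- meet
    have hmeet : ((p, s) ⊓ (q, t) : L × Bool) ∈ DoublingSet x y →
        ∃ c : DoublingSet x y,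
          IsGreatest {d : DoublingSet x y | d ≤ ⟨(p, s), hp⟩ ∧ d ≤ ⟨(q, t), hq⟩} c := by
      intro hm
      refine ⟨⟨_, hm⟩, ⟨?_, ?_⟩, ?_⟩
      · exact Subtype.mk_le_mk.mpr inf_le_left
      · exact Subtype.mk_le_mk.mpr inf_le_right
      · rintro ⟨⟨r, u⟩, hr⟩ ⟨h1, h2⟩
        exact Subtype.mk_le_mk.mpr
          (le_inf (Subtype.mk_le_mk.mp h1) (Subtype.mk_le_mk.mp h2))
    revert hp hq
    cases s <;> cases t <;> intro hp hq hmeet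
    · exact hmeet (Or.inl ⟨rfl, inf_le_left.trans (hfalse p hp)⟩)
    · exact hmeet (Or.inl ⟨rfl, inf_le_left.trans (hfalse p hp)⟩)
    · exact hmeet (Or.inl ⟨rfl, inf_le_right.trans (hfalse q hq)⟩)
    · by_cases hm : ((p, true) ⊓ (q, true) : L × Bool) ∈ DoublingSet x y
      · exact hmeet hm
      · have hy : p ⊓ q ≤ y := by
          by_contra hy
          exact hm (Or.inr ⟨rfl, Or.inl hy⟩)
        have hx : ¬ x ≤ p ⊓ q := by
          intro hx
          exact hm (Or.inr ⟨rfl, Or.inr ⟨hx, hy⟩⟩)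
        have hmem2 : ((p ⊓ q, false) : L × Bool) ∈ DoublingSet x y :=
          Or.inl ⟨rfl, hy⟩
        refine ⟨⟨_, hmem2⟩, ⟨?_, ?_⟩, ?_⟩
        · exact Subtype.mk_le_mk.mpr (Prod.mk_le_mk.mpr ⟨inf_le_left, Bool.false_le true⟩)
        · exact Subtype.mk_le_mk.mpr (Prod.mk_le_mk.mpr ⟨inf_le_right, Bool.false_le true⟩)
        · rintro ⟨⟨r, u⟩, hr⟩ ⟨h1, h2⟩
          obtain ⟨h1a, -⟩ := Prod.mk_le_mk.mp (Subtype.mk_le_mk.mp h1)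
          obtain ⟨h2a, -⟩ := Prod.mk_le_mk.mp (Subtype.mk_le_mk.mp h2)
          have hrpq : r ≤ p ⊓ q := le_inf h1a h2a
          have hu : u = false := by
            cases u
            · rfl
            · rcases htrue r hr with h' | ⟨h1', -⟩
              · exact absurd (hrpq.trans hy) h'
              · exact absurd (h1'.trans hrpq) hx
          subst hu
          exact Subtype.mk_le_mk.mpr (Prod.mk_le_mk.mpr ⟨hrpq, le_refl false⟩)
end

section
/- Let L be a finite polygonal lattice. Then any two maximal chains C, C' of L are connected by a sequence of maximal chains C = C_0, C_1, ..., C_N = C' such that consecutive chains differ by a polygonal flip. -/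
/-!
Two maximal chains `C, C'` that agree up to a common element `a` are connected, by downward
induction on `a`; the theorem is the case `a = ⊥`. Let `y ∈ C` and `z ∈ C'` cover `a`. If `y = z`,
the chains agree up to `y`. Otherwise `[a, y ⊔ z]` is a polygon, and a maximal chain `E` that agrees
with `C` up to `a` and passes through `y` flips across it to a maximal chain `E'` through `z`;
the induction hypothesis connects `C` to `E` and `E'` to `C'`.
-/

variable {L : Type*} [Lattice L]

/-- `c` is a maximal chain of the subposet `s`. -/
def MaxChainIn (s c : Set L) : Prop :=
  c ⊆ s ∧ IsChain (· ≤ ·) c ∧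
    ∀ c' : Set L, c ⊆ c' → c' ⊆ s → IsChain (· ≤ ·) c' → c' = c

/-- The interval `[a, b]` is a polygon: it has exactly two maximal chains, and these
agree only at the bottom and top elements. -/
def IsPolygon (a b : L) : Prop :=
  a < b ∧ ∃ c₁ c₂ : Set L,
    MaxChainIn (Set.Icc a b) c₁ ∧ MaxChainIn (Set.Icc a b) c₂ ∧
    c₁ ≠ c₂ ∧ c₁ ∩ c₂ = {a, b} ∧
    ∀ c : Set L, MaxChainIn (Set.Icc a b) c → c = c₁ ∨ c = c₂

/-- A lattice is polygonal if joins of covers and meets of cocovers give polygons. -/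
def IsPolygonal (L : Type*) [Lattice L] : Prop :=
  (∀ x y z : L, x ⋖ y → x ⋖ z → y ≠ z → IsPolygon x (y ⊔ z)) ∧
  (∀ x y z : L, y ⋖ x → z ⋖ x → y ≠ z → IsPolygon (y ⊓ z) x)

/-- Maximal chains `C, C'` differ by a polygonal flip: there is a polygon `[a, b]`
such that `C` and `C'` agree below `a` and above `b`, and restrict to the two distinct
maximal chains of `[a, b]`. -/
def PolygonalFlip (C C' : Set L) : Prop :=
  ∃ a b : L, IsPolygon a b ∧
    C ∩ Set.Iic a = C' ∩ Set.Iic a ∧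
    C ∩ Set.Ici b = C' ∩ Set.Ici b ∧
    MaxChainIn (Set.Icc a b) (C ∩ Set.Icc a b) ∧
    MaxChainIn (Set.Icc a b) (C' ∩ Set.Icc a b) ∧
    C ∩ Set.Icc a b ≠ C' ∩ Set.Icc a b

open Set Relation

theorem Relation.ReflTransGen.exists_seq {α : Type*} {r : α → α → Prop} {a b : α}
    (h : ReflTransGen r a b) :
    ∃ (N : ℕ) (f : ℕ → α), f 0 = a ∧ f N = b ∧ ∀ i < N, r (f i) (f (i + 1)) := by
  induction h using Relation.ReflTransGen.head_induction_on with
  | refl => exact ⟨0, fun _ => b, rfl, rfl, by simp⟩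
  | @head a c hac _ ih =>
    obtain ⟨N, f, hf0, hfN, hf⟩ := ih
    refine ⟨N + 1, fun | 0 => a | i + 1 => f i, rfl, hfN, ?_⟩
    rintro (_ | i) hi
    · simpa [hf0] using hac
    · exact hf i (Nat.lt_of_succ_lt_succ hi)

theorem mem_of_inter_Iic_eq {α : Type*} [Preorder α] {C C' : Set α} {a : α}
    (h : C ∩ Iic a = C' ∩ Iic a) (ha : a ∈ C) : a ∈ C' :=
  (h ▸ ⟨ha, le_rfl⟩ : a ∈ C' ∩ Iic a).1

section PartialOrder

variable {α : Type*} [PartialOrder α] {C : Set α} {a b y : α}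

theorem IsMaxChain.exists_covBy_mem [Finite α] (hC : IsMaxChain (· ≤ ·) C) (ha : a ∈ C)
    (hb : b ∈ C) (hab : a < b) : ∃ y ∈ C, a ⋖ y := by
  let s := Flag.ofIsMaxChain C hC
  obtain ⟨y, hay, -⟩ := exists_covBy_le_of_lt (α := s) (a := ⟨a, ha⟩) (b := ⟨b, hb⟩) hab
  exact ⟨y, y.2, Flag.coe_covBy_coe.2 hay⟩

theorem IsChain.inter_Iic_eq_insert_of_covBy (hC : IsChain (· ≤ ·) C) (ha : a ∈ C) (hy : y ∈ C)
    (hay : a ⋖ y) : C ∩ Iic y = insert y (C ∩ Iic a) := by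
  ext e
  simp only [mem_inter_iff, mem_Iic, mem_insert_iff]
  constructor
  · rintro ⟨he, hey⟩
    rcases hC.total he ha with hea | hae
    · exact Or.inr ⟨he, hea⟩
    · rcases hay.eq_or_eq hae hey with rfl | rfl
      · exact Or.inr ⟨he, le_rfl⟩
      · exact Or.inl rfl
  · rintro (rfl | ⟨he, hea⟩)
    · exact ⟨hy, le_rfl⟩
    · exact ⟨he, hea.trans hay.le⟩

end PartialOrder

section MaxChainIn

variable {s c E M : Set L} {a t : L}

theorem MaxChainIn.inter_eq_of_subset (hc : MaxChainIn s c) (hE : IsChain (· ≤ ·) E)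
    (hcE : c ⊆ E) : E ∩ s = c :=
  hc.2.2 _ (subset_inter hcE hc.1) inter_subset_right (hE.mono inter_subset_left)

theorem IsMaxChain.maxChainIn_inter (hM : IsMaxChain (· ≤ ·) M)
    (hs : ∀ x ∈ s, ∀ e ∈ M, e ∉ s → x ≤ e ∨ e ≤ x) : MaxChainIn s (M ∩ s) := by
  refine ⟨inter_subset_right, hM.1.mono inter_subset_left, fun d hMd hds hd => ?_⟩
  refine subset_antisymm (fun x hx => ⟨?_, hds hx⟩) hMd
  refine (Flag.mem_iff_forall_le_or_ge (s := Flag.ofIsMaxChain M hM)).2 fun e he => ?_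
  by_cases hes : e ∈ s
  · exact hd.total hx (hMd ⟨he, hes⟩)
  · exact hs x (hds hx) e he hes

theorem IsMaxChain.maxChainIn_inter_Iic (hM : IsMaxChain (· ≤ ·) M) (ha : a ∈ M) :
    MaxChainIn (Iic a) (M ∩ Iic a) :=
  hM.maxChainIn_inter fun _ hx _ he hea =>
    Or.inl (hx.trans ((hM.1.total he ha).resolve_left hea))

theorem IsMaxChain.maxChainIn_inter_Ici (hM : IsMaxChain (· ≤ ·) M) (ht : t ∈ M) :
    MaxChainIn (Ici t) (M ∩ Ici t) :=
  hM.maxChainIn_inter fun _ hx _ he het =>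
    Or.inr (((hM.1.total he ht).resolve_right het).trans hx)

theorem IsMaxChain.maxChainIn_inter_Icc (hM : IsMaxChain (· ≤ ·) M) (ha : a ∈ M) (ht : t ∈ M) :
    MaxChainIn (Icc a t) (M ∩ Icc a t) := by
  refine hM.maxChainIn_inter fun x hx e he he' => ?_
  rcases hM.1.total he ha with hea | hae
  · exact Or.inr (hea.trans hx.1)
  · exact Or.inl (hx.2.trans ((hM.1.total he ht).resolve_left fun het => he' ⟨hae, het⟩))

theorem IsMaxChain.exists_isMaxChain_inter_Iic_eq {C D : Set L} (hC : IsMaxChain (· ≤ ·) C)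
    (ha : a ∈ C) (hD : IsChain (· ≤ ·) D) (hDa : D ⊆ Ici a) :
    ∃ E, IsMaxChain (· ≤ ·) E ∧ D ⊆ E ∧ E ∩ Iic a = C ∩ Iic a := by
  have hchain : IsChain (· ≤ ·) ((C ∩ Iic a) ∪ D) :=
    isChain_union.2 ⟨hC.1.mono inter_subset_left, hD,
      fun _ hu _ hv _ => Or.inl (hu.2.trans (hDa hv))⟩
  obtain ⟨E, hE, hsub⟩ := hchain.exists_maxChain
  exact ⟨E, hE, subset_union_right.trans hsub,
    (hC.maxChainIn_inter_Iic ha).inter_eq_of_subset hE.1 (subset_union_left.trans hsub)⟩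

end MaxChainIn

def MaxChainFlip (C C' : Set L) : Prop :=
  IsMaxChain (· ≤ ·) C ∧ IsMaxChain (· ≤ ·) C' ∧ PolygonalFlip C C'

theorem IsPolygon.exists_maxChainFlip {C : Set L} {a t y z : L} (hP : IsPolygon a t)
    (hC : IsMaxChain (· ≤ ·) C) (ha : a ∈ C) (hy : y ∈ Icc a t) (hz : z ∈ Icc a t)
    (hyz : ¬(y ≤ z ∨ z ≤ y)) :
    ∃ E E', MaxChainFlip E E' ∧ y ∈ E ∧ z ∈ E' ∧
      E ∩ Iic a = C ∩ Iic a ∧ E' ∩ Iic a = C ∩ Iic a := by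
  have hpair : ∀ x ∈ Icc a t, IsChain (· ≤ ·) ({x, t} : Set L) ∧ ({x, t} : Set L) ⊆ Ici a :=
    fun x hx => ⟨IsChain.singleton.insert fun _ hb _ => Or.inl (mem_singleton_iff.1 hb ▸ hx.2),
      insert_subset hx.1 (singleton_subset_iff.2 hP.1.le)⟩
  obtain ⟨E, hE, hyE, hEa⟩ := hC.exists_isMaxChain_inter_Iic_eq ha (hpair y hy).1 (hpair y hy).2
  obtain ⟨F, hF, hzF, hFa⟩ := hC.exists_isMaxChain_inter_Iic_eq ha (hpair z hz).1 (hpair z hz).2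
  have haE := mem_of_inter_Iic_eq hEa.symm ha
  have htE : t ∈ E := hyE (mem_insert_of_mem _ rfl)
  have hp := hF.maxChainIn_inter_Icc (mem_of_inter_Iic_eq hFa.symm ha)
    (hzF (mem_insert_of_mem _ rfl))
  -- `E'` follows `E` outside `[a, t]` and `F` inside it.
  obtain ⟨E', hE', hsub, hE'a⟩ := hE.exists_isMaxChain_inter_Iic_eq haE
    (D := (F ∩ Icc a t) ∪ (E ∩ Ici t))
    (isChain_union.2 ⟨hp.2.1, hE.1.mono inter_subset_left,
      fun _ hu _ hv _ => Or.inl (hu.2.2.trans hv.2)⟩)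
    (union_subset (fun _ hu => hu.2.1) (fun _ hu => hP.1.le.trans hu.2))
  have hE't : E' ∩ Ici t = E ∩ Ici t :=
    (hE.maxChainIn_inter_Ici htE).inter_eq_of_subset hE'.1 (subset_union_right.trans hsub)
  have hE'p : E' ∩ Icc a t = F ∩ Icc a t :=
    hp.inter_eq_of_subset hE'.1 (subset_union_left.trans hsub)
  have hyF : y ∉ F ∩ Icc a t := fun hyF => hyz (hF.1.total hyF.1 (hzF (mem_insert _ _)))
  refine ⟨E, E', ⟨hE, hE', a, t, hP, hE'a.symm, hE't.symm, hE.maxChainIn_inter_Icc haE htE,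
    hE'p ▸ hp, fun heq => hyF (hE'p ▸ heq ▸ ⟨hyE (mem_insert _ _), hy⟩)⟩,
    hyE (mem_insert _ _), hsub (Or.inl ⟨hzF (mem_insert _ _), hz⟩), hEa, hE'a.trans hEa⟩

theorem reflTransGen_maxChainFlip_of_inter_Iic_eq [Finite L] (hL : IsPolygonal L) (a : L)
    {C C' : Set L} (hC : IsMaxChain (· ≤ ·) C) (hC' : IsMaxChain (· ≤ ·) C') (ha : a ∈ C)
    (h : C ∩ Iic a = C' ∩ Iic a) : ReflTransGen MaxChainFlip C C' := by
  induction a using WellFoundedGT.induction generalizing C C' with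
  | _ a ih =>
  have ha' := mem_of_inter_Iic_eq h ha
  by_cases hCa : C ⊆ Iic a
  · have : C ⊆ C' := fun e he => (h ▸ ⟨he, hCa he⟩ : e ∈ C' ∩ Iic a).1
    exact hC.2 hC'.1 this ▸ .refl
  by_cases hC'a : C' ⊆ Iic a
  · have : C' ⊆ C := fun e he => (h.symm ▸ ⟨he, hC'a he⟩ : e ∈ C ∩ Iic a).1
    exact hC'.2 hC.1 this ▸ .refl
  obtain ⟨b, hb, hba⟩ := not_subset.1 hCa
  obtain ⟨b', hb', hb'a⟩ := not_subset.1 hC'a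
  obtain ⟨y, hyC, hay⟩ := hC.exists_covBy_mem ha hb (hC.1.lt_of_not_ge hb ha hba)
  obtain ⟨z, hzC', haz⟩ := hC'.exists_covBy_mem ha' hb' (hC'.1.lt_of_not_ge hb' ha' hb'a)
  rcases eq_or_ne y z with rfl | hyz
  · refine ih y hay.lt hC hC' hyC ?_
    rw [hC.1.inter_Iic_eq_insert_of_covBy ha hyC hay,
      hC'.1.inter_Iic_eq_insert_of_covBy ha' hzC' hay, h]
  have hincomp : ¬(y ≤ z ∨ z ≤ y) := by
    rintro (hle | hle)
    · exact hyz ((haz.eq_or_eq hay.le hle).resolve_left hay.ne')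
    · exact hyz ((hay.eq_or_eq haz.le hle).resolve_left haz.ne').symm
  obtain ⟨E, E', hflip, hyE, hzE', hEa, hE'a⟩ :=
    (hL.1 a y z hay haz hyz).exists_maxChainFlip hC ha
      ⟨hay.le, le_sup_left⟩ ⟨haz.le, le_sup_right⟩ hincomp
  have hCE : ReflTransGen MaxChainFlip C E := by
    refine ih y hay.lt hC hflip.1 hyC ?_
    rw [hC.1.inter_Iic_eq_insert_of_covBy ha hyC hay,
      hflip.1.1.inter_Iic_eq_insert_of_covBy (mem_of_inter_Iic_eq hEa.symm ha) hyE hay, hEa]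
  have hE'C' : ReflTransGen MaxChainFlip E' C' := by
    refine ih z haz.lt hflip.2.1 hC' hzE' ?_
    rw [hflip.2.1.1.inter_Iic_eq_insert_of_covBy (mem_of_inter_Iic_eq hE'a.symm ha) hzE' haz,
      hC'.1.inter_Iic_eq_insert_of_covBy ha' hzC' haz, hE'a, h]
  exact hCE.trans (.head hflip hE'C')

/-- In a finite polygonal lattice, any two maximal chains are connected
by a sequence of maximal chains in which consecutive chains differ by a polygonal
flip. -/
theorem stmt14 {L : Type*} [Lattice L] [Fintype L] (hL : IsPolygonal L)
    (C C' : Set L) (hC : IsMaxChain (· ≤ ·) C) (hC' : IsMaxChain (· ≤ ·) C') :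
    ∃ (N : ℕ) (f : ℕ → Set L), f 0 = C ∧ f N = C' ∧
      (∀ i ≤ N, IsMaxChain (· ≤ ·) (f i)) ∧
      (∀ i < N, PolygonalFlip (f i) (f (i + 1))) := by
  suffices hconn : ReflTransGen MaxChainFlip C C' by
    obtain ⟨N, f, hf0, hfN, hf⟩ := hconn.exists_seq
    refine ⟨N, f, hf0, hfN, fun i hi => ?_, fun i hi => (hf i hi).2.2⟩
    rcases hi.lt_or_eq with hi | rfl
    · exact (hf i hi).1
    · exact hfN ▸ hC'
  cases isEmpty_or_nonempty L
  · rw [C.eq_empty_of_isEmpty, C'.eq_empty_of_isEmpty]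
  let := Fintype.toOrderBot L
  refine reflTransGen_maxChainFlip_of_inter_Iic_eq hL ⊥ hC hC' hC.bot_mem ?_
  rw [Iic_bot, inter_singleton_of_mem hC.bot_mem, inter_singleton_of_mem hC'.bot_mem]
end

section
/- Let Λ = kQ(n)/⟨all paths of length n−1⟩ be the cluster-tilted algebra of the cyclic quiver Q(n) with vertices 1,...,n and arrows i → i+1 (indices mod n). For indecomposable modules X(i,j) with i ∈ Z/nZ and 1 ≤ j, ℓ < n−1, if Ext¹_Λ(X(k,ℓ), X(i,j)) ≠ 0 and supp(X(i,j)) ∩ supp(X(k,ℓ)) = ∅, then the unique nonsplit extension has middle term X(i, j+ℓ), i.e., there is an exact sequence 0 → X(i,j) → X(i,j+ℓ) → X(k,ℓ) → 0 and necessarily k = i − j mod n. -/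
universe u v

/-- A representation of a quiver with vertex set `ι` and (at most simple) arrows
given by the relation `Q` over the field `k`. -/
structure QuivRep (k : Type u) [Field k] (ι : Type v) (Q : ι → ι → Prop) where
  V : ι → Type u
  acg : ∀ i, AddCommGroup (V i)
  mod : ∀ i, Module k (V i)
  φ : ∀ i j, Q i j → (V i →ₗ[k] V j)

attribute [instance] QuivRep.acg QuivRep.mod

/-- A morphism of quiver representations. -/
structure QuivRepHom {k : Type u} [Field k] {ι : Type v} {Q : ι → ι → Prop}
    (M N : QuivRep k ι Q) where
  app : ∀ i, M.V i →ₗ[k] N.V i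
  comm : ∀ i j (h : Q i j), (N.φ i j h).comp (app i) = (app j).comp (M.φ i j h)

/-- `0 → A → B → C → 0` is a short exact sequence of quiver representations. -/
def IsSES {k : Type u} [Field k] {ι : Type v} {Q : ι → ι → Prop}
    {A B C : QuivRep k ι Q} (f : QuivRepHom A B) (g : QuivRepHom B C) : Prop :=
  (∀ i, Function.Injective (f.app i)) ∧ (∀ i, Function.Surjective (g.app i)) ∧
  (∀ i, LinearMap.range (f.app i) = LinearMap.ker (g.app i))

/-- The short exact sequence `0 → A → B → C → 0` determined by `f` splits. -/
def IsSplit {k : Type u} [Field k] {ι : Type v} {Q : ι → ι → Prop}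
    {A B : QuivRep k ι Q} (f : QuivRepHom A B) : Prop :=
  ∃ r : QuivRepHom B A, ∀ i (x : A.V i), r.app i (f.app i x) = x

/-- All vector spaces of the representation are finite-dimensional. -/
def FinDimRep {k : Type u} [Field k] {ι : Type v} {Q : ι → ι → Prop}
    (M : QuivRep k ι Q) : Prop :=
  ∀ i, FiniteDimensional k (M.V i)

/-- The representation is indecomposable: it is nonzero and its only idempotent
endomorphisms are `0` and the identity. -/
def Indec {k : Type u} [Field k] {ι : Type v} {Q : ι → ι → Prop}
    (M : QuivRep k ι Q) : Prop :=
  (∃ i, ∃ x : M.V i, x ≠ 0) ∧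
  ∀ e : QuivRepHom M M, (∀ i, (e.app i).comp (e.app i) = e.app i) →
    (∀ i, e.app i = 0) ∨ (∀ i, e.app i = LinearMap.id)

/-- `dim Ext¹(X, Y) ≤ 1`, expressed concretely: any two nonsplit extensions of `X`
by `Y` are equivalent up to rescaling by a nonzero scalar `c` (i.e. their classes
are proportional in `Ext¹(X, Y)`). -/
def ExtDimLeOne {k : Type u} [Field k] {ι : Type v} {Q : ι → ι → Prop}
    (X Y : QuivRep k ι Q) : Prop :=
  ∀ (Z₁ Z₂ : QuivRep k ι Q) (f₁ : QuivRepHom Y Z₁) (g₁ : QuivRepHom Z₁ X)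
    (f₂ : QuivRepHom Y Z₂) (g₂ : QuivRepHom Z₂ X),
    IsSES f₁ g₁ → IsSES f₂ g₂ → ¬ IsSplit f₁ → ¬ IsSplit f₂ →
    ∃ c : k, c ≠ 0 ∧ ∃ θ : QuivRepHom Z₁ Z₂,
      (∀ i, Function.Bijective (θ.app i)) ∧
      (∀ i (y : Y.V i), θ.app i (f₁.app i y) = f₂.app i (c • y)) ∧
      (∀ i (z : Z₁.V i), g₂.app i (θ.app i z) = g₁.app i z)

/-! ### Type `A` quivers and cluster-tilted relations -/

/-- The underlying graph of a quiver. -/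
def UnderlyingGraph {m : ℕ} (Q : Fin m → Fin m → Prop) : SimpleGraph (Fin m) where
  Adj i j := i ≠ j ∧ (Q i j ∨ Q j i)
  symm := ⟨fun _ _ h => ⟨h.1.symm, h.2.symm⟩⟩
  loopless := ⟨fun _ h => h.1 rfl⟩

/-- The Buan–Vatne characterization of type `A` quivers: a loopless, 2-cycle-free
quiver all of whose cycles are oriented 3-cycles, each vertex has at most four
neighbors, the four arrows at a 4-valent vertex pair into two 3-cycles, and at a
3-valent vertex two arrows lie in a 3-cycle while the third lies in no 3-cycle. -/
def IsTypeA {m : ℕ} (Q : Fin m → Fin m → Prop) : Prop :=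
  (∀ i, ¬ Q i i) ∧ (∀ i j, Q i j → ¬ Q j i) ∧
  (∀ (v : Fin m) (c : (UnderlyingGraph Q).Walk v v), c.IsCycle → c.length = 3) ∧
  (∀ a b c : Fin m, (UnderlyingGraph Q).Adj a b → (UnderlyingGraph Q).Adj b c →
    (UnderlyingGraph Q).Adj c a →
    (Q a b ∧ Q b c ∧ Q c a) ∨ (Q b a ∧ Q c b ∧ Q a c)) ∧
  (∀ v, ((UnderlyingGraph Q).neighborSet v).ncard ≤ 4) ∧
  (∀ v, ((UnderlyingGraph Q).neighborSet v).ncard = 4 →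
    ∃ a b c d : Fin m, ({a, b, c, d} : Set (Fin m)) = (UnderlyingGraph Q).neighborSet v ∧
      a ≠ b ∧ a ≠ c ∧ a ≠ d ∧ b ≠ c ∧ b ≠ d ∧ c ≠ d ∧
      (UnderlyingGraph Q).Adj a b ∧ (UnderlyingGraph Q).Adj c d) ∧
  (∀ v, ((UnderlyingGraph Q).neighborSet v).ncard = 3 →
    ∃ a b c : Fin m, ({a, b, c} : Set (Fin m)) = (UnderlyingGraph Q).neighborSet v ∧
      a ≠ b ∧ a ≠ c ∧ b ≠ c ∧ (UnderlyingGraph Q).Adj a b ∧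
      ∀ w, (UnderlyingGraph Q).Adj c w → ¬ (UnderlyingGraph Q).Adj v w)

/-- The representation satisfies the relations of the type `A` cluster-tilted
algebra: the composition of any two consecutive arrows of a 3-cycle vanishes. -/
def TypeARel {k : Type u} [Field k] {m : ℕ} {Q : Fin m → Fin m → Prop}
    (M : QuivRep k (Fin m) Q) : Prop :=
  ∀ (a b c : Fin m) (hab : Q a b) (hbc : Q b c) (_hca : Q c a),
    (M.φ b c hbc).comp (M.φ a b hab) = 0

/-! ### The cyclic quiver `Q(n)` -/

/-- The cyclic quiver `Q(n)`: vertex set `ZMod n`, arrows `i → i + 1`. -/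
def CycQ (n : ℕ) : ZMod n → ZMod n → Prop := fun i j => j = i + 1

/-- Transport a representation space along an equality of vertices. -/
def castHom {k : Type u} [Field k] {ι : Type v} {Q : ι → ι → Prop}
    (M : QuivRep k ι Q) {a b : ι} (h : a = b) : M.V a →ₗ[k] M.V b :=
  Eq.rec (motive := fun c _ => M.V a →ₗ[k] M.V c) LinearMap.id h

/-- The composite of `t` consecutive arrow maps starting at vertex `v`. -/
def cycComp {k : Type u} [Field k] {n : ℕ} (M : QuivRep k (ZMod n) (CycQ n)) :
    ∀ (t : ℕ) (v : ZMod n), M.V v →ₗ[k] M.V (v + (t : ZMod n))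
  | 0, v => castHom M (show v = v + ((0 : ℕ) : ZMod n) by push_cast; ring)
  | (t + 1), v =>
      (castHom M
        (show v + (t : ZMod n) + 1 = v + (((t + 1 : ℕ)) : ZMod n) by push_cast; ring)).comp
      ((M.φ (v + (t : ZMod n)) (v + (t : ZMod n) + 1) rfl).comp (cycComp M t v))

/-- The relations of the cluster-tilted algebra of `Q(n)`: every path of length
`n - 1` acts by zero. -/
def CycRel {k : Type u} [Field k] {n : ℕ} (M : QuivRep k (ZMod n) (CycQ n)) : Prop :=
  ∀ v : ZMod n, cycComp M (n - 1) v = 0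

/-- The support of the string module `X(i, j)` over the cluster-tilted algebra of
`Q(n)`: the cyclic interval `{i, i-1, …, i-j+1}` in `ZMod n`. -/
def inSupp (n i j : ℕ) (v : ZMod n) : Prop :=
  ∃ t : ℕ, t < j ∧ v = (i : ZMod n) - (t : ZMod n)

/-- `M` is (isomorphic to) the indecomposable string module `X(i, j)`: it is
one-dimensional on the cyclic interval `{i-j+1, …, i}`, zero elsewhere, and the
arrow maps within the support (pointing towards the top vertex `i`) are
injective. -/
def IsStringX {k : Type u} [Field k] {n : ℕ}
    (M : QuivRep k (ZMod n) (CycQ n)) (i j : ℕ) : Prop :=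
  (∀ v : ZMod n, inSupp n i j v → Module.finrank k (M.V v) = 1) ∧
  (∀ v : ZMod n, ¬ inSupp n i j v → ∀ x : M.V v, x = 0) ∧
  (∀ v : ZMod n, inSupp n i j v → inSupp n i j (v + 1) →
    Function.Injective (M.φ v (v + 1) rfl))

/-! Since the supports are disjoint, `Z` agrees with `X(i, j)` on the support of `X(i, j)`
and with `X(κ, ℓ)` on that of `X(κ, ℓ)`, and the extension splits unless `Z` has a nonzero
arrow entering the support of `X(i, j)`. The only such arrow is `i - j → i - j + 1`, which
forces `κ = i - j`. Then `Z` is one-dimensional on the union of the supports, with injective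
arrows except possibly `i → i + 1`; the relation killing paths of length `n - 1` prevents the
union from being all of `ZMod n`, so `j + ℓ < n` and `Z` is `X(i, j + ℓ)`. -/

open Function Module

theorem LinearMap.injective_of_finrank_eq_one {k V W : Type*} [Field k] [AddCommGroup V]
    [Module k V] [AddCommGroup W] [Module k W] (hV : finrank k V = 1) {φ : V →ₗ[k] W}
    (hφ : φ ≠ 0) : Injective φ := by
  rw [← LinearMap.ker_eq_bot]
  by_contra hker
  obtain ⟨x, hxker, hx⟩ := Submodule.exists_mem_ne_zero_of_ne_bot hker
  refine hφ (LinearMap.ext fun w => ?_)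
  obtain ⟨c, rfl⟩ := (finrank_eq_one_iff_of_nonzero' x hx).mp hV w
  simp [LinearMap.mem_ker.mp hxker]

namespace IsSES

variable {k : Type u} [Field k] {ι : Type v} {Q : ι → ι → Prop} {A B C : QuivRep k ι Q}
  {f : QuivRepHom A B} {g : QuivRepHom B C}

theorem bijective_left (hses : IsSES f g) {v : ι} (hC : ∀ x : C.V v, x = 0) :
    Bijective (f.app v) :=
  ⟨hses.1 v, fun _ => (hses.2.2 v).ge (LinearMap.mem_ker.mpr (hC _))⟩

theorem bijective_right (hses : IsSES f g) {v : ι} (hA : ∀ x : A.V v, x = 0) :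
    Bijective (g.app v) := by
  refine ⟨?_, hses.2.1 v⟩
  rw [← LinearMap.ker_eq_bot, ← hses.2.2 v, Submodule.eq_bot_iff]
  rintro _ ⟨x, rfl⟩
  rw [hA x, map_zero]

theorem eq_zero (hses : IsSES f g) {v : ι} (hA : ∀ x : A.V v, x = 0)
    (hC : ∀ x : C.V v, x = 0) (y : B.V v) : y = 0 := by
  obtain ⟨x, rfl⟩ := (hses.bijective_left hC).2 y
  rw [hA x, map_zero]

theorem finrank_eq_left (hses : IsSES f g) {v : ι} (hC : ∀ x : C.V v, x = 0) :
    finrank k (B.V v) = finrank k (A.V v) :=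
  (LinearEquiv.ofBijective _ (hses.bijective_left hC)).finrank_eq.symm

theorem finrank_eq_right (hses : IsSES f g) {v : ι} (hA : ∀ x : A.V v, x = 0) :
    finrank k (B.V v) = finrank k (C.V v) :=
  (LinearEquiv.ofBijective _ (hses.bijective_right hA)).finrank_eq

theorem injective_φ_of_left (hses : IsSES f g) {v w : ι} (h : Q v w)
    (hC : ∀ x : C.V v, x = 0) (hA : Injective (A.φ v w h)) : Injective (B.φ v w h) := by
  have hf := (hses.bijective_left hC).2
  intro y₁ y₂ hy
  obtain ⟨x₁, rfl⟩ := hf y₁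
  obtain ⟨x₂, rfl⟩ := hf y₂
  have hcomm := LinearMap.congr_fun (f.comm v w h)
  simp only [LinearMap.comp_apply] at hcomm
  rw [hcomm, hcomm] at hy
  rw [hA (hses.1 w hy)]

theorem injective_φ_of_right (hses : IsSES f g) {v w : ι} (h : Q v w)
    (hA : ∀ x : A.V v, x = 0) (hC : Injective (C.φ v w h)) : Injective (B.φ v w h) := by
  intro y₁ y₂ hy
  have hcomm := LinearMap.congr_fun (g.comm v w h)
  simp only [LinearMap.comp_apply] at hcomm
  refine (hses.bijective_right hA).1 (hC ?_)
  rw [hcomm, hcomm, hy]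

/-- The retraction is `f⁻¹` on `S` and `0` off `S`; it commutes with the arrows because
`B` has no nonzero arrow entering `S` from outside. -/
theorem isSplit_of_support (hses : IsSES f g) (S : Set ι) (hA : ∀ v ∉ S, ∀ x : A.V v, x = 0)
    (hC : ∀ v ∈ S, ∀ x : C.V v, x = 0)
    (hB : ∀ v w (h : Q v w), v ∉ S → w ∈ S → B.φ v w h = 0) : IsSplit f := by
  classical
  let r : ∀ v, B.V v →ₗ[k] A.V v := fun v =>
    if hv : v ∈ S then (LinearEquiv.ofBijective _ (hses.bijective_left (hC v hv))).symm else 0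
  have hr : ∀ v ∈ S, ∀ x, r v (f.app v x) = x := fun v hv x => by
    simp only [r, dif_pos hv]
    exact (LinearEquiv.ofBijective _ _).symm_apply_apply x
  refine ⟨⟨r, fun v w h => LinearMap.ext fun y => ?_⟩, fun v x => ?_⟩
  · by_cases hw : w ∈ S
    · by_cases hv : v ∈ S
      · obtain ⟨x, rfl⟩ := (hses.bijective_left (hC v hv)).2 y
        have hcomm := LinearMap.congr_fun (f.comm v w h) x
        simp only [LinearMap.comp_apply] at hcomm ⊢
        rw [hr v hv, hcomm, hr w hw]
      · simp [hA v hv (r v y), hB v w h hv hw]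
    · exact (hA w hw _).trans (hA w hw _).symm
  · by_cases hv : v ∈ S
    · exact hr v hv x
    · rw [hA v hv x, map_zero, map_zero]

end IsSES

section Cyclic

variable {k : Type u} [Field k] {n : ℕ}

theorem castHom_injective {ι : Type v} {Q : ι → ι → Prop} (M : QuivRep k ι Q) {a b : ι}
    (h : a = b) : Injective (castHom M h) := by
  subst h
  exact fun _ _ => id

theorem cycComp_injective (M : QuivRep k (ZMod n) (CycQ n)) {m : ℕ} {v : ZMod n}
    (h : ∀ s < m, Injective (M.φ (v + s) (v + s + 1) rfl)) : Injective (cycComp M m v) := by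
  induction m with
  | zero => exact castHom_injective M _
  | succ m ih =>
    exact (castHom_injective M _).comp
      ((h m m.lt_succ_self).comp (ih fun s hs => h s (hs.trans m.lt_succ_self)))

theorem CycRel.exists_not_injective {M : QuivRep k (ZMod n) (CycQ n)} (hM : CycRel M)
    {v : ZMod n} {x : M.V v} (hx : x ≠ 0) :
    ∃ s < n - 1, ¬ Injective (M.φ (v + s) (v + s + 1) rfl) := by
  by_contra! h
  exact hx (cycComp_injective M h (by rw [hM v, LinearMap.zero_apply, LinearMap.zero_apply]))

end Cyclic

theorem ZMod.natCast_ne_zero_of_pos_of_lt {n a : ℕ} (h₀ : 0 < a) (hn : a < n) :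
    (a : ZMod n) ≠ 0 := by
  rw [Ne, ZMod.natCast_eq_zero_iff]
  exact fun hdvd => (Nat.le_of_dvd h₀ hdvd).not_gt hn

section Support

variable {n : ℕ}

theorem not_inSupp_sub {i j : ℕ} (hj : j < n) : ¬ inSupp n i j (i - j) := by
  rintro ⟨t, ht, hEq⟩
  have := ZMod.natCast_ne_zero_of_pos_of_lt (n := n) (a := j - t) (by omega) (by omega)
  rw [Nat.cast_sub ht.le] at this
  exact this (by linear_combination -hEq)

theorem inSupp_sub_add_one {i j : ℕ} (hj : 0 < j) : inSupp n i j (i - j + 1) :=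
  ⟨j - 1, by omega, by rw [Nat.cast_sub hj]; push_cast; ring⟩

theorem inSupp.add_one {i j : ℕ} {v : ZMod n} (hv : inSupp n i j v) (hvi : v ≠ i) :
    inSupp n i j (v + 1) := by
  obtain ⟨t, ht, rfl⟩ := hv
  obtain _ | t := t
  · simp at hvi
  · exact ⟨t, by omega, by push_cast; ring⟩

theorem eq_sub_of_not_inSupp_of_inSupp_add_one {i j : ℕ} {v : ZMod n} (hv : ¬ inSupp n i j v)
    (hv₁ : inSupp n i j (v + 1)) : v = i - j := by
  obtain ⟨t, ht, hEq⟩ := hv₁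
  have hv' : v = i - (t + 1 : ℕ) := by push_cast; linear_combination hEq
  obtain hlt | rfl : t + 1 < j ∨ t + 1 = j := by omega
  · exact absurd ⟨t + 1, hlt, hv'⟩ hv
  · exact hv'

theorem not_inSupp_add_one {i m : ℕ} (hm : m < n) : ¬ inSupp n i m (i + 1) := by
  rintro ⟨t, ht, hEq⟩
  exact ZMod.natCast_ne_zero_of_pos_of_lt (n := n) (a := t + 1) (by omega) (by omega)
    (by push_cast; linear_combination hEq)

theorem inSupp_of_le [NeZero n] (i : ℕ) {m : ℕ} (hm : n ≤ m) (v : ZMod n) : inSupp n i m v :=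
  ⟨(i - v : ZMod n).val, (ZMod.val_lt _).trans_le hm, by simp⟩

theorem inSupp_add_iff {i κ j ℓ : ℕ} (hκ : (κ : ZMod n) = i - j) {v : ZMod n} :
    inSupp n i (j + ℓ) v ↔ inSupp n i j v ∨ inSupp n κ ℓ v := by
  constructor
  · rintro ⟨t, ht, rfl⟩
    rcases Nat.lt_or_ge t j with h | h
    · exact Or.inl ⟨t, h, rfl⟩
    · exact Or.inr ⟨t - j, by omega, by rw [hκ, Nat.cast_sub h]; ring⟩
  · rintro (⟨t, ht, rfl⟩ | ⟨t, ht, rfl⟩)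
    · exact ⟨t, by omega, rfl⟩
    · exact ⟨j + t, by omega, by rw [hκ]; push_cast; ring⟩

end Support

namespace IsSES

variable {k : Type u} [Field k] {n i κ j ℓ : ℕ} {A Z C : QuivRep k (ZMod n) (CycQ n)}
  {f : QuivRepHom A Z} {g : QuivRepHom Z C}

theorem φ_sub_ne_zero (hses : IsSES f g) (hA : IsStringX A i j) (hC : IsStringX C κ ℓ)
    (hdisj : ∀ v : ZMod n, ¬ (inSupp n i j v ∧ inSupp n κ ℓ v)) (hns : ¬ IsSplit f) :
    Z.φ (i - j) (i - j + 1) rfl ≠ 0 := by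
  refine fun hφ => hns (hses.isSplit_of_support {v | inSupp n i j v} hA.2.1
    (fun v hv => hC.2.1 v (hdisj v ⟨hv, ·⟩)) ?_)
  rintro v _ rfl hv hv₁
  obtain rfl := eq_sub_of_not_inSupp_of_inSupp_add_one hv hv₁
  exact hφ

theorem natCast_eq_sub (hses : IsSES f g) (hA : IsStringX A i j) (hC : IsStringX C κ ℓ)
    (hdisj : ∀ v : ZMod n, ¬ (inSupp n i j v ∧ inSupp n κ ℓ v)) (hns : ¬ IsSplit f)
    (hj : 0 < j) (hjn : j < n) : (κ : ZMod n) = i - j := by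
  have hsub : inSupp n κ ℓ (i - j) := by
    by_contra hsub
    refine hses.φ_sub_ne_zero hA hC hdisj hns (LinearMap.ext fun x => ?_)
    rw [hses.eq_zero (hA.2.1 _ (not_inSupp_sub hjn)) (hC.2.1 _ hsub) x, map_zero, map_zero]
  by_contra hκ
  exact hdisj _ ⟨inSupp_sub_add_one hj, hsub.add_one (Ne.symm hκ)⟩

theorem finrank_eq_one (hses : IsSES f g) (hA : IsStringX A i j) (hC : IsStringX C κ ℓ)
    (hdisj : ∀ v : ZMod n, ¬ (inSupp n i j v ∧ inSupp n κ ℓ v)) {v : ZMod n}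
    (hv : inSupp n i j v ∨ inSupp n κ ℓ v) : finrank k (Z.V v) = 1 := by
  rcases hv with hv | hv
  · rw [hses.finrank_eq_left (hC.2.1 v (hdisj v ⟨hv, ·⟩)), hA.1 v hv]
  · rw [hses.finrank_eq_right (hA.2.1 v (hdisj v ⟨·, hv⟩)), hC.1 v hv]

theorem injective_φ (hses : IsSES f g) (hA : IsStringX A i j) (hC : IsStringX C κ ℓ)
    (hdisj : ∀ v : ZMod n, ¬ (inSupp n i j v ∧ inSupp n κ ℓ v)) (hκ : (κ : ZMod n) = i - j)
    (hφ : Z.φ (i - j) (i - j + 1) rfl ≠ 0) {v : ZMod n}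
    (hv : inSupp n i j v ∨ inSupp n κ ℓ v) (hvi : v ≠ i) : Injective (Z.φ v (v + 1) rfl) := by
  rcases hv with hvA | hvC
  · exact hses.injective_φ_of_left rfl (hC.2.1 v (hdisj v ⟨hvA, ·⟩))
      (hA.2.2 v hvA (hvA.add_one hvi))
  · by_cases hvκ : v = κ
    · rw [hκ] at hvκ
      subst hvκ
      exact LinearMap.injective_of_finrank_eq_one (hses.finrank_eq_one hA hC hdisj (Or.inr hvC)) hφ
    · exact hses.injective_φ_of_right rfl (hA.2.1 v (hdisj v ⟨·, hvC⟩))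
        (hC.2.2 v hvC (hvC.add_one hvκ))

/-- If the supports covered all of `ZMod n`, the path of length `n - 1` starting at `i + 1`
would avoid the only possibly non-injective arrow `i → i + 1`. -/
theorem add_lt_of_cycRel (hses : IsSES f g) (hA : IsStringX A i j) (hC : IsStringX C κ ℓ)
    (hdisj : ∀ v : ZMod n, ¬ (inSupp n i j v ∧ inSupp n κ ℓ v)) (hκ : (κ : ZMod n) = i - j)
    (hφ : Z.φ (i - j) (i - j + 1) rfl ≠ 0) (hZ : CycRel Z) (hjn : j < n) : j + ℓ < n := by
  by_contra! hle
  have : NeZero n := ⟨by omega⟩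
  have hcover : ∀ v, inSupp n i j v ∨ inSupp n κ ℓ v :=
    fun v => (inSupp_add_iff hκ).1 (inSupp_of_le i hle v)
  have : Nontrivial (Z.V (i + 1)) := nontrivial_of_finrank_eq_succ
    (hses.finrank_eq_one hA hC hdisj (hcover (i + 1)))
  obtain ⟨x, hx⟩ := exists_ne (0 : Z.V (i + 1))
  obtain ⟨s, hs, hninj⟩ := hZ.exists_not_injective hx
  refine hninj (hses.injective_φ hA hC hdisj hκ hφ (hcover _) fun heq => ?_)
  exact ZMod.natCast_ne_zero_of_pos_of_lt (n := n) (a := s + 1) (by omega) (by omega)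
    (by push_cast; linear_combination heq)

theorem isStringX_add (hses : IsSES f g) (hA : IsStringX A i j) (hC : IsStringX C κ ℓ)
    (hdisj : ∀ v : ZMod n, ¬ (inSupp n i j v ∧ inSupp n κ ℓ v)) (hκ : (κ : ZMod n) = i - j)
    (hφ : Z.φ (i - j) (i - j + 1) rfl ≠ 0) (hlt : j + ℓ < n) : IsStringX Z i (j + ℓ) := by
  refine ⟨fun v hv => hses.finrank_eq_one hA hC hdisj ((inSupp_add_iff hκ).1 hv),
    fun v hv => ?_, fun v hv hv₁ => ?_⟩
  · rw [inSupp_add_iff hκ, not_or] at hv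
    exact hses.eq_zero (hA.2.1 v hv.1) (hC.2.1 v hv.2)
  · refine hses.injective_φ hA hC hdisj hκ hφ ((inSupp_add_iff hκ).1 hv) ?_
    rintro rfl
    exact not_inSupp_add_one hlt hv₁

end IsSES

theorem stmt15_general (k : Type u) [Field k] (n i κ j ℓ : ℕ)
    (hj : 1 ≤ j) (hj' : j < n - 1)
    (Mij Mkl : QuivRep k (ZMod n) (CycQ n))
    (hMij : IsStringX Mij i j) (hMkl : IsStringX Mkl κ ℓ)
    (hext : ∃ (Z : QuivRep k (ZMod n) (CycQ n)) (f : QuivRepHom Mij Z)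
      (g : QuivRepHom Z Mkl), CycRel Z ∧ IsSES f g ∧ ¬ IsSplit f)
    (hdisj : ∀ v : ZMod n, ¬ (inSupp n i j v ∧ inSupp n κ ℓ v)) :
    (κ : ZMod n) = (i : ZMod n) - (j : ZMod n) ∧
    ∀ (Z : QuivRep k (ZMod n) (CycQ n)) (f : QuivRepHom Mij Z)
      (g : QuivRepHom Z Mkl), CycRel Z → IsSES f g → ¬ IsSplit f →
      IsStringX Z i (j + ℓ) := by
  obtain ⟨Z₀, f₀, g₀, -, hses₀, hns₀⟩ := hext
  have hκ := hses₀.natCast_eq_sub hMij hMkl hdisj hns₀ hj (by omega)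
  refine ⟨hκ, fun Z f g hZ hses hns => ?_⟩
  have hφ := hses.φ_sub_ne_zero hMij hMkl hdisj hns
  have hlt := hses.add_lt_of_cycRel hMij hMkl hdisj hκ hφ hZ (by omega)
  exact hses.isStringX_add hMij hMkl hdisj hκ hφ hlt

/-- Let `Λ = kQ(n)/⟨paths of length n-1⟩`.  For indecomposables
`X(i,j)`, `X(κ,ℓ)` with `1 ≤ j, ℓ < n - 1`, if `Ext¹(X(κ,ℓ), X(i,j)) ≠ 0` (i.e.
some nonsplit extension `0 → X(i,j) → Z → X(κ,ℓ) → 0` exists) and the supports of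
`X(i,j)` and `X(κ,ℓ)` are disjoint, then necessarily `κ = i - j (mod n)` and the
unique nonsplit extension has middle term `X(i, j+ℓ)`: every such nonsplit
extension has middle term isomorphic to `X(i, j+ℓ)`. -/
theorem stmt15 (k : Type u) [Field k] (n i κ j ℓ : ℕ) (hn : 3 ≤ n)
    (hj : 1 ≤ j) (hj' : j < n - 1) (hℓ : 1 ≤ ℓ) (hℓ' : ℓ < n - 1)
    (Mij Mkl : QuivRep k (ZMod n) (CycQ n))
    (hMij : IsStringX Mij i j) (hMkl : IsStringX Mkl κ ℓ)
    (hrel₁ : CycRel Mij) (hrel₂ : CycRel Mkl)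
    (hext : ∃ (Z : QuivRep k (ZMod n) (CycQ n)) (f : QuivRepHom Mij Z)
      (g : QuivRepHom Z Mkl), CycRel Z ∧ IsSES f g ∧ ¬ IsSplit f)
    (hdisj : ∀ v : ZMod n, ¬ (inSupp n i j v ∧ inSupp n κ ℓ v)) :
    (κ : ZMod n) = (i : ZMod n) - (j : ZMod n) ∧
    ∀ (Z : QuivRep k (ZMod n) (CycQ n)) (f : QuivRepHom Mij Z)
      (g : QuivRepHom Z Mkl), CycRel Z → IsSES f g → ¬ IsSplit f →
      IsStringX Z i (j + ℓ) :=
  stmt15_general k n i κ j ℓ hj hj' Mij Mkl hMij hMkl hext hdisj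
end

section
/- Let Q be a type A quiver or a cyclic quiver, Λ its cluster-tilted algebra, and suppose any two maximal green sequences of Q are connected by polygonal flips in the oriented exchange graph, where every polygon is a square or pentagon. Then the set of lengths {ℓ ∈ ℕ : there exists a maximal green sequence of Q of length ℓ} is an interval of integers [ℓ_min, ℓ_max]. -/
variable {L : Type*} [Lattice L]

/-- A chain containing `a < b` splits into the parts below `a`, between, and above `b`. -/
lemma chain_decomp [Finite L] {C : Set L} (hC : IsChain (· ≤ ·) C) {a b : L}
    (ha : a ∈ C) (hb : b ∈ C) (hab : a < b) :
    C.ncard = (C ∩ Set.Iio a).ncard + (C ∩ Set.Icc a b).ncard + (C ∩ Set.Ioi b).ncard := by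
  have hsplit : C = (C ∩ Set.Iio a) ∪ ((C ∩ Set.Icc a b) ∪ (C ∩ Set.Ioi b)) := by
    ext x
    constructor
    · intro hx
      have h1 : x ≤ a ∨ a ≤ x := hC.total hx ha
      have h2 : x ≤ b ∨ b ≤ x := hC.total hx hb
      rcases h1 with h1 | h1
      · rcases eq_or_lt_of_le h1 with rfl | hlt
        · exact Or.inr (Or.inl ⟨hx, le_refl _, hab.le⟩)
        · exact Or.inl ⟨hx, hlt⟩
      · rcases h2 with h2 | h2
        · exact Or.inr (Or.inl ⟨hx, h1, h2⟩)
        · rcases eq_or_lt_of_le h2 with rfl | hlt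
          · exact Or.inr (Or.inl ⟨hx, h1, le_refl _⟩)
          · exact Or.inr (Or.inr ⟨hx, hlt⟩)
    · rintro (⟨hx, _⟩ | ⟨hx, _⟩ | ⟨hx, _⟩) <;> exact hx
  have d1 : Disjoint (C ∩ Set.Iio a) ((C ∩ Set.Icc a b) ∪ (C ∩ Set.Ioi b)) := by
    rw [Set.disjoint_left]
    rintro x ⟨_, hx⟩ (⟨_, hy, _⟩ | ⟨_, hy⟩)
    · exact absurd hy (not_le_of_gt hx)
    · exact absurd (hx.trans (hab.trans hy)) (lt_irrefl x)
  have d2 : Disjoint (C ∩ Set.Icc a b) (C ∩ Set.Ioi b) := by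
    rw [Set.disjoint_left]
    rintro x ⟨_, _, hx⟩ ⟨_, hy⟩
    exact absurd (lt_of_le_of_lt hx hy) (lt_irrefl x)
  conv_lhs => rw [hsplit]
  rw [Set.ncard_union_eq d1 (Set.toFinite _) (Set.toFinite _),
    Set.ncard_union_eq d2 (Set.toFinite _) (Set.toFinite _)]
  ring

/-- A polygonal flip changes the cardinality of a maximal chain by at most 1. -/
lemma flip_ncard [Finite L]
    (hpoly : ∀ a b : L, IsPolygon a b →
      ∀ c₁ c₂ : Set L, MaxChainIn (Set.Icc a b) c₁ → MaxChainIn (Set.Icc a b) c₂ →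
        c₁ ≠ c₂ →
        (c₁.ncard = 3 ∧ c₂.ncard = 3) ∨ (c₁.ncard = 3 ∧ c₂.ncard = 4) ∨
        (c₁.ncard = 4 ∧ c₂.ncard = 3))
    {C C' : Set L} (hC : IsChain (· ≤ ·) C) (hC' : IsChain (· ≤ ·) C')
    (hf : PolygonalFlip C C') :
    C'.ncard ≤ C.ncard + 1 ∧ C.ncard ≤ C'.ncard + 1 := by
  obtain ⟨a, b, hp, hIic, hIci, hM, hM', hne⟩ := hf
  obtain ⟨hab, c₁, c₂, h1, h2, hne12, hinter, huniq⟩ := hp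
  have hsub : ({a, b} : Set L) ⊆ c₁ ∩ c₂ := hinter.ge
  have ha12 : a ∈ c₁ ∩ c₂ := hsub (Set.mem_insert a {b})
  have hb12 : b ∈ c₁ ∩ c₂ := hsub (Set.mem_insert_of_mem a rfl)
  have hmemab : ∀ c : Set L, MaxChainIn (Set.Icc a b) c → a ∈ c ∧ b ∈ c := by
    intro c hc
    rcases huniq c hc with rfl | rfl
    · exact ⟨ha12.1, hb12.1⟩
    · exact ⟨ha12.2, hb12.2⟩
  have haC : a ∈ C := ((hmemab _ hM).1).1
  have hbC : b ∈ C := ((hmemab _ hM).2).1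
  have haC' : a ∈ C' := ((hmemab _ hM').1).1
  have hbC' : b ∈ C' := ((hmemab _ hM').2).1
  have e1 : C ∩ Set.Iio a = C' ∩ Set.Iio a := by
    have : ∀ D : Set L, D ∩ Set.Iio a = (D ∩ Set.Iic a) ∩ Set.Iio a := by
      intro D; ext x; simp (config := {contextual := true}) [le_of_lt, and_assoc]
    rw [this C, this C', hIic]
  have e2 : C ∩ Set.Ioi b = C' ∩ Set.Ioi b := by
    have : ∀ D : Set L, D ∩ Set.Ioi b = (D ∩ Set.Ici b) ∩ Set.Ioi b := by
      intro D; ext x; simp (config := {contextual := true}) [le_of_lt, and_assoc]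
    rw [this C, this C', hIci]
  have dC := chain_decomp hC haC hbC hab
  have dC' := chain_decomp hC' haC' hbC' hab
  rw [e1, e2] at dC
  have := hpoly a b ⟨hab, c₁, c₂, h1, h2, hne12, hinter, huniq⟩
    (C ∩ Set.Icc a b) (C' ∩ Set.Icc a b) hM hM' hne
  omega

/-- Discrete intermediate value theorem. -/
lemma nat_ivt (g : ℕ → ℕ) (N m : ℕ)
    (h : ∀ i < N, g (i + 1) ≤ g i + 1 ∧ g i ≤ g (i + 1) + 1)
    (h0 : g 0 ≤ m) (hN : m ≤ g N) : ∃ i ≤ N, g i = m := by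
  induction N with
  | zero => exact ⟨0, le_refl _, le_antisymm h0 hN⟩
  | succ n ih =>
    by_cases hm : m ≤ g n
    · obtain ⟨i, hi, hgi⟩ := ih (fun i hi => h i (hi.trans (Nat.lt_succ_self n))) hm
      exact ⟨i, hi.trans (Nat.le_succ n), hgi⟩
    · have := h n (Nat.lt_succ_self n)
      exact ⟨n + 1, le_refl _, by omega⟩

lemma maxchain_nonempty [Nonempty L] {C : Set L} (hC : IsMaxChain (· ≤ ·) C) :
    C.Nonempty := by
  by_contra h
  rw [Set.not_nonempty_iff_eq_empty] at h
  obtain ⟨x⟩ := ‹Nonempty L›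
  have hch : IsChain (· ≤ ·) ({x} : Set L) :=
    Set.Subsingleton.isChain Set.subsingleton_singleton
  have hsub : C ⊆ ({x} : Set L) := h ▸ Set.empty_subset _
  have := hC.2 hch hsub
  rw [h] at this
  exact (Set.singleton_nonempty x).ne_empty this.symm

/-- Let `L` be the oriented exchange graph of a type `A` or cyclic
quiver `Q` (a finite lattice whose maximal chains are the maximal green sequences
of `Q`, the length of a green sequence being the length of the chain).  Suppose any
two maximal chains (maximal green sequences) are connected by polygonal flips, and
every polygon is a square (both maximal chains of cardinality `3`) or a pentagon
(maximal chains of cardinalities `3` and `4`).  Then the set of lengths of maximal green sequences is an interval `[ℓ_min, ℓ_max]` of natural numbers. -/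
theorem stmt19 {L : Type*} [Lattice L] [Fintype L] [Nonempty L]
    (hflip : ∀ C C' : Set L, IsMaxChain (· ≤ ·) C → IsMaxChain (· ≤ ·) C' →
      ∃ (N : ℕ) (f : ℕ → Set L), f 0 = C ∧ f N = C' ∧
        (∀ i ≤ N, IsMaxChain (· ≤ ·) (f i)) ∧
        (∀ i < N, PolygonalFlip (f i) (f (i + 1))))
    (hpoly : ∀ a b : L, IsPolygon a b →
      ∀ c₁ c₂ : Set L, MaxChainIn (Set.Icc a b) c₁ → MaxChainIn (Set.Icc a b) c₂ →
        c₁ ≠ c₂ →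
        (c₁.ncard = 3 ∧ c₂.ncard = 3) ∨ (c₁.ncard = 3 ∧ c₂.ncard = 4) ∨
        (c₁.ncard = 4 ∧ c₂.ncard = 3)) :
    ∃ lmin lmax : ℕ,
      {ℓ : ℕ | ∃ C : Set L, IsMaxChain (· ≤ ·) C ∧ C.ncard = ℓ + 1} =
        Set.Icc lmin lmax := by
  
  classical
  set S : Set ℕ := {ℓ : ℕ | ∃ C : Set L, IsMaxChain (· ≤ ·) C ∧ C.ncard = ℓ + 1} with hS
  have hmem : ∀ C : Set L, IsMaxChain (· ≤ ·) C → C.ncard - 1 ∈ S := by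
    intro C hC
    have h1 : 1 ≤ C.ncard := (maxchain_nonempty hC).ncard_pos (Set.toFinite C)
    exact ⟨C, hC, by omega⟩
  have hSne : S.Nonempty := by
    obtain ⟨C, hC, -⟩ := (IsChain.empty : IsChain (· ≤ ·) (∅ : Set L)).exists_maxChain
    exact ⟨C.ncard - 1, hmem C hC⟩
  have hSbdd : S ⊆ Set.Iic (Nat.card L) := by
    rintro ℓ ⟨C, hC, hcard⟩
    have : C.ncard ≤ (Set.univ : Set L).ncard :=
      Set.ncard_le_ncard (Set.subset_univ C) (Set.toFinite _)
    rw [Set.ncard_univ] at this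
    simp only [Set.mem_Iic]
    omega
  have hSfin : S.Finite := (Set.finite_Iic _).subset hSbdd
  have hconv : ∀ k l m : ℕ, k ∈ S → l ∈ S → k ≤ m → m ≤ l → m ∈ S := by
    rintro k l m ⟨C, hC, hk⟩ ⟨C', hC', hl⟩ hkm hml
    obtain ⟨N, f, hf0, hfN, hmax, hstep⟩ := hflip C C' hC hC'
    have hpos : ∀ i ≤ N, 1 ≤ (f i).ncard := fun i hi =>
      (maxchain_nonempty (hmax i hi)).ncard_pos (Set.toFinite _)
    set g : ℕ → ℕ := fun i => (f i).ncard - 1 with hg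
    have hb : ∀ i < N, g (i + 1) ≤ g i + 1 ∧ g i ≤ g (i + 1) + 1 := by
      intro i hi
      have h1 := flip_ncard hpoly (hmax i hi.le).1 (hmax (i + 1) hi).1 (hstep i hi)
      have h2 := hpos i hi.le
      have h3 := hpos (i + 1) hi
      simp only [hg]
      omega
    have h0 : g 0 ≤ m := by simp only [hg, hf0]; omega
    have hN : m ≤ g N := by simp only [hg, hfN]; omega
    obtain ⟨i, hi, hgi⟩ := nat_ivt g N m hb h0 hN
    refine ⟨f i, hmax i hi, ?_⟩
    have := hpos i hi
    simp only [hg] at hgi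
    omega
  refine ⟨sInf S, sSup S, ?_⟩
  ext m
  simp only [Set.mem_Icc]
  constructor
  · intro hm
    exact ⟨Nat.sInf_le hm, le_csSup hSfin.bddAbove hm⟩
  · rintro ⟨h1, h2⟩
    exact hconv _ _ m (Nat.sInf_mem hSne) (hSne.csSup_mem hSfin) h1 h2
end
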